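/- arXiv:2105.00446 — 4 statements merged into one kernel-verified Lean document; each statement's English description precedes it below -/
import Mathlib

section
/- Let $G$ be a Polish group acting transitively and continuously on a compact metric space $X$. Then for any $x \in X$, the stabilizer $\Gamma = \{g \in G : g \cdot x = x\}$ is a closed subgroup of $G$, and $X$ is homeomorphic to the quotient space $G/\Gamma$. -/
open Filter Topology Set Pointwise
set_option linter.unusedSectionVars false
set_option linter.unnecessarySimpa false
set_option maxHeartbeats 1000000

/-- Invariant for the successive-approximation construction in Effros' theorem. -/
def effInv {G X : Type*} [MetricSpace G] [Group G] [MetricSpace X] [MulAction G X]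
    (S : Set G) (z y : X) (n : ℕ) (s : G × G × Set G) : Prop :=
  s.1 ∈ S ∧ s.2.1 ∈ S ∧ IsOpen s.2.2 ∧ (1 : G) ∈ s.2.2 ∧
  (∀ g ∈ s.2.2, g * s.1 ∈ S ∧ dist (g * s.1) s.1 < (1/2 : ℝ)^n ∧
      dist ((g * s.1) • z) (s.1 • z) < (1/2 : ℝ)^n) ∧
  s.2.1 • y ∈ closure ((· • (s.1 • z)) '' s.2.2) ∧
  dist (s.1 • z) (s.2.1 • y) ≤ 4 * (1/2 : ℝ)^n

section aux
variable {G X : Type*} [TopologicalSpace G] [Group G] [IsTopologicalGroup G]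
    [PolishSpace G] [MetricSpace X] [CompactSpace X] [MulAction G X] [ContinuousSMul G X]

lemma effros_nonmeagre_univ [Nonempty X] : ¬ IsMeagre (univ : Set X) := by
  intro h
  rw [IsMeagre, compl_univ] at h
  have hd : Dense (∅ : Set X) := dense_of_mem_residual h
  exact absurd hd.nonempty (by simp)

lemma effros_lemA (htrans : ∀ x y : X, ∃ g : G, g • x = y) (z : X) {U : Set G}
    (hU : U ∈ 𝓝 1) : z ∈ interior (closure ((· • z) '' U)) := by
  have : Nonempty X := ⟨z⟩
  obtain ⟨V, Vo, V1, VV⟩ := exists_open_nhds_one_mul_subset hU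
  set W : Set G := V ∩ V⁻¹ with hW
  have Wo : IsOpen W := Vo.inter Vo.inv
  have W1 : (1 : G) ∈ W := ⟨V1, by simpa using V1⟩
  have Wsymm : ∀ g ∈ W, g⁻¹ ∈ W := fun g hg => ⟨hg.2, by simpa using hg.1⟩
  have hWU : ∀ g ∈ W, ∀ h ∈ W, g * h ∈ U := fun g hg h hh =>
    VV (mul_mem_mul hg.1 hh.1)
  -- countable dense set
  obtain ⟨D, Dcnt, Ddense⟩ := TopologicalSpace.exists_countable_dense G
  obtain ⟨f, hf⟩ := Dcnt.exists_eq_range Ddense.nonempty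
  -- cover
  have cover : (⋃ n, f n • ((· • z) '' W)) = univ := by
    ext y
    simp only [mem_iUnion, mem_univ, iff_true]
    obtain ⟨g, rfl⟩ := htrans z y
    obtain ⟨h, hhD, hmem⟩ := Ddense.exists_mem_open (Wo.smul g) ⟨g • (1:G), smul_mem_smul_set W1⟩
    obtain ⟨n, rfl⟩ : ∃ n, f n = h := by
      have : h ∈ range f := hf ▸ hhD
      obtain ⟨n, hn⟩ := this; exact ⟨n, hn⟩
    obtain ⟨w, hw, hww⟩ := hmem
    refine ⟨n, ⟨w⁻¹ • z, ⟨w⁻¹, Wsymm w hw, rfl⟩, ?_⟩⟩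
    have : f n = g * w := by simpa [smul_eq_mul] using hww.symm
    rw [this]
    simp [smul_smul, mul_assoc]
  -- some translate is nonmeagre
  have hnm : ∃ n, ¬ IsMeagre (f n • ((· • z) '' W)) := by
    by_contra h
    push_neg at h
    have := isMeagre_iUnion h
    rw [cover] at this
    exact effros_nonmeagre_univ this
  obtain ⟨n, hn⟩ := hnm
  have hne : (interior (closure ((· • z) '' W))).Nonempty := by
    by_contra h
    rw [Set.not_nonempty_iff_eq_empty] at h
    apply hn
    have hnd : IsNowhereDense ((· • z) '' W) := h
    have hnd2 : IsNowhereDense (f n • ((· • z) '' W)) := by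
      rw [IsNowhereDense, closure_smul, interior_smul, hnd]
      simp
    exact isMeagre_iff_countable_union_isNowhereDense.mpr
      ⟨{closure (f n • ((· • z) '' W))}, by simpa using hnd2.closure,
        countable_singleton _, by simpa using subset_closure⟩
  obtain ⟨w0, hw0⟩ := hne
  have hw0' : w0 ∈ closure ((· • z) '' W) := interior_subset hw0
  rw [mem_closure_iff] at hw0'
  obtain ⟨u, huO, g', hg', rfl⟩ :=
    hw0' _ isOpen_interior hw0
  -- `g' • z ∈ interior (closure img)`
  refine mem_interior.mpr ⟨g'⁻¹ • interior (closure ((· • z) '' W)), ?_, (isOpen_interior.smul g'⁻¹), ?_⟩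
  · intro v hv
    obtain ⟨v', hv', rfl⟩ := hv
    have : g'⁻¹ • v' ∈ g'⁻¹ • closure ((· • z) '' W) := smul_mem_smul_set (interior_subset hv')
    rw [← closure_smul] at this
    refine closure_mono ?_ this
    rintro _ ⟨_, ⟨g, hg, rfl⟩, rfl⟩
    exact ⟨g'⁻¹ * g, hWU _ (Wsymm g' hg') _ hg, by simp [smul_smul]⟩
  · have := smul_mem_smul_set (a := g'⁻¹) huO
    simpa using this

lemma effros_micro (htrans : ∀ x y : X, ∃ g : G, g • x = y) (z : X) {U : Set G}
    (hU : U ∈ 𝓝 1) : (· • z) '' U ∈ 𝓝 z := by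
  letI := TopologicalSpace.upgradeIsCompletelyMetrizable G
  have hX : Nonempty X := ⟨z⟩
  obtain ⟨V, Vo, V1, VV⟩ := exists_open_nhds_one_mul_subset hU
  obtain ⟨V₂, V₂o, V₂1, VV₂⟩ := exists_open_nhds_one_mul_subset (Vo.mem_nhds V1)
  set S : Set G := V₂ ∩ V₂⁻¹ with hS
  have So : IsOpen S := V₂o.inter V₂o.inv
  have S1 : (1:G) ∈ S := ⟨V₂1, by simpa using V₂1⟩
  have Ssymm : ∀ g ∈ S, g⁻¹ ∈ S := fun g hg => ⟨hg.2, by simpa using hg.1⟩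
  have hS4 : ∀ a ∈ S, ∀ b ∈ S, ∀ c ∈ S, ∀ d ∈ S, a * b * (c * d) ∈ U := fun a ha b hb c hc d hd =>
    VV (mul_mem_mul (VV₂ (mul_mem_mul ha.1 hb.1)) (VV₂ (mul_mem_mul hc.1 hd.1)))
  have hclS : closure S ⊆ S * S := by
    intro g hg
    rw [mem_closure_iff] at hg
    obtain ⟨u, hu1, hu2⟩ := hg (g • S) (So.smul g) ⟨1, S1, by simp⟩
    obtain ⟨t, ht, rfl⟩ := hu1
    exact ⟨g • t, hu2, t⁻¹, Ssymm t ht, by simp [smul_eq_mul, mul_assoc]⟩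
  have hclU : ∀ p ∈ closure S, ∀ q ∈ closure S, q⁻¹ * p ∈ U := by
    intro p hpc q hqc
    obtain ⟨a, ha, b, hb, rfl⟩ := hclS hpc
    obtain ⟨c, hc, d, hd, rfl⟩ := hclS hqc
    have := hS4 d⁻¹ (Ssymm d hd) c⁻¹ (Ssymm c hc) a ha b hb
    simpa [mul_assoc, mul_inv_rev] using this
  -- adaptive neighborhoods
  have adapt : ∀ (p : G) (w : X) (n : ℕ), p ∈ S → ∃ V : Set G, IsOpen V ∧ (1:G) ∈ V ∧
      ∀ g ∈ V, g * p ∈ S ∧ dist (g * p) p < (1/2 : ℝ)^n ∧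
        dist ((g * p) • w) (p • w) < (1/2 : ℝ)^n := by
    intro p w n hp
    have hpow : (0:ℝ) < (1/2 : ℝ)^n := pow_pos (by norm_num) n
    have c1 : Continuous fun g : G => g * p := continuous_mul_right p
    refine ⟨{g | g * p ∈ S} ∩ ({g | dist (g * p) p < (1/2 : ℝ)^n} ∩
        {g | dist ((g * p) • w) (p • w) < (1/2 : ℝ)^n}), ?_, ?_, ?_⟩
    · refine (So.preimage c1).inter (IsOpen.inter ?_ ?_)
      · exact Metric.isOpen_ball.preimage c1
      · exact Metric.isOpen_ball.preimage (c1.smul continuous_const)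
    · exact ⟨by simpa using hp, by simpa using hpow, by simpa using hpow⟩
    · exact fun g hg => ⟨hg.1, hg.2.1, hg.2.2⟩
  -- initial neighborhood
  obtain ⟨V₀, V₀o, V₀one, hV₀⟩ := adapt 1 z 0 S1
  -- main claim: every point of the closure of the V₀-orbit of z is in the U-orbit
  have key : ∀ y ∈ closure ((· • z) '' V₀), y ∈ (· • z) '' U := by
    intro y hy
    -- the step of the construction
    have step : ∀ (n : ℕ) (s : G × G × Set G), effInv S z y n s →
        ∃ s' : G × G × Set G, effInv S z y (n+1) s' ∧
          dist s'.1 s.1 ≤ (1/2 : ℝ)^n ∧ dist s'.2.1 s.2.1 ≤ (1/2 : ℝ)^n := by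
      rintro n ⟨p, q, V⟩ ⟨hp, hq, hVo, hV1, hVprop, hlink, hdist⟩
      obtain ⟨W, Wo, W1, hWprop⟩ := adapt q y (n+1) hq
      have hA1 := effros_lemA htrans (q • y) (Wo.mem_nhds W1)
      rw [mem_closure_iff] at hlink
      obtain ⟨u, huI, g, hgV, rfl⟩ := hlink _ isOpen_interior hA1
      have hp'S : g * p ∈ S := (hVprop g hgV).1
      have hp'd : dist (g * p) p < (1/2 : ℝ)^n := (hVprop g hgV).2.1
      have hzz : g • (p • z) = (g * p) • z := (mul_smul g p z).symm
      have hlink' : (g * p) • z ∈ closure ((· • (q • y)) '' W) := by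
        rw [← hzz]; exact interior_subset huI
      have hWball : (· • (q • y)) '' W ⊆ Metric.closedBall (q • y) ((1/2 : ℝ)^(n+1)) := by
        rintro _ ⟨h, hh, rfl⟩
        have h2 := (hWprop h hh).2.2
        rw [Metric.mem_closedBall]
        calc dist (h • (q • y)) (q • y) = dist ((h * q) • y) (q • y) := by rw [mul_smul]
          _ ≤ _ := le_of_lt h2
      have hd1 : dist ((g * p) • z) (q • y) ≤ (1/2 : ℝ)^(n+1) :=
        (closure_minimal hWball Metric.isClosed_closedBall) hlink'
      obtain ⟨V', V'o, V'1, hV'prop⟩ := adapt (g * p) z (n+1) hp'S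
      have hA2 := effros_lemA htrans ((g * p) • z) (V'o.mem_nhds V'1)
      rw [mem_closure_iff] at hlink'
      obtain ⟨u2, huI2, h, hhW, rfl⟩ := hlink' _ isOpen_interior hA2
      have hq'S : h * q ∈ S := (hWprop h hhW).1
      have hq'd : dist (h * q) q < (1/2 : ℝ)^(n+1) := (hWprop h hhW).2.1
      have hyy : h • (q • y) = (h * q) • y := (mul_smul h q y).symm
      have hlink'' : (h * q) • y ∈ closure ((· • ((g * p) • z)) '' V') := by
        rw [← hyy]; exact interior_subset huI2
      have hq'dy : dist ((h * q) • y) (q • y) < (1/2 : ℝ)^(n+1) := (hWprop h hhW).2.2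
      have hpowle : ((1:ℝ)/2)^(n+1) ≤ (1/2 : ℝ)^n :=
        pow_le_pow_of_le_one (by norm_num) (by norm_num) (Nat.le_succ n)
      refine ⟨(g * p, h * q, V'), ⟨hp'S, hq'S, V'o, V'1, hV'prop, hlink'', ?_⟩,
        le_of_lt hp'd, le_of_lt (lt_of_lt_of_le hq'd hpowle)⟩
      have hpow : (0:ℝ) < (1/2 : ℝ)^(n+1) := pow_pos (by norm_num) _
      calc dist ((g * p) • z) ((h * q) • y)
          ≤ dist ((g * p) • z) (q • y) + dist ((h * q) • y) (q • y) := by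
            rw [dist_comm ((h * q) • y) (q • y)]; exact dist_triangle _ _ _
        _ ≤ (1/2 : ℝ)^(n+1) + (1/2 : ℝ)^(n+1) := add_le_add hd1 (le_of_lt hq'dy)
        _ ≤ 4 * (1/2 : ℝ)^(n+1) := by linarith
    -- base case
    have base : effInv S z y 0 (1, 1, V₀) := by
      have himg : (· • z) '' V₀ ⊆ Metric.closedBall z 1 := by
        rintro _ ⟨g, hg, rfl⟩
        have := (hV₀ g hg).2.2
        simp only [mul_one, one_smul] at this
        exact Metric.mem_closedBall.mpr (by simpa using le_of_lt this)
      have hyz : dist y z ≤ 1 := (closure_minimal himg Metric.isClosed_closedBall) hy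
      refine ⟨S1, S1, V₀o, V₀one, by simpa using hV₀, by simpa [one_smul] using hy, ?_⟩
      simp only [one_smul]
      rw [dist_comm]
      simpa using hyz.trans (by norm_num)
    choose! F hF hda hdb using step
    set seq : ℕ → G × G × Set G := fun n => Nat.rec (1, 1, V₀) (fun n s => F n s) n with hseq
    have hseqs : ∀ n, seq (n+1) = F n (seq n) := fun n => rfl
    have hInv : ∀ n, effInv S z y n (seq n) := by
      intro n
      induction n with
      | zero => exact base
      | succ n ih => rw [hseqs]; exact hF n _ ih
    have hCp : CauchySeq (fun n => (seq n).1) := by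
      refine cauchySeq_of_le_geometric (1/2 : ℝ) 1 (by norm_num) (fun n => ?_)
      rw [one_mul, dist_comm, hseqs]
      exact hda n (seq n) (hInv n)
    have hCq : CauchySeq (fun n => (seq n).2.1) := by
      refine cauchySeq_of_le_geometric (1/2 : ℝ) 1 (by norm_num) (fun n => ?_)
      rw [one_mul, dist_comm, hseqs]
      exact hdb n (seq n) (hInv n)
    obtain ⟨p, hp⟩ := cauchySeq_tendsto_of_complete hCp
    obtain ⟨q, hq⟩ := cauchySeq_tendsto_of_complete hCq
    have hpS : p ∈ closure S :=
      isClosed_closure.mem_of_tendsto hp (Eventually.of_forall fun n => subset_closure (hInv n).1)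
    have hqS : q ∈ closure S :=
      isClosed_closure.mem_of_tendsto hq (Eventually.of_forall fun n => subset_closure (hInv n).2.1)
    have hzt : Tendsto (fun n => (seq n).1 • z) atTop (𝓝 (p • z)) := hp.smul tendsto_const_nhds
    have hyt : Tendsto (fun n => (seq n).2.1 • y) atTop (𝓝 (q • y)) := hq.smul tendsto_const_nhds
    have hdt : Tendsto (fun n => dist ((seq n).1 • z) ((seq n).2.1 • y)) atTop
        (𝓝 (dist (p • z) (q • y))) := hzt.dist hyt
    have h0 : Tendsto (fun n => (4:ℝ) * (1/2 : ℝ)^n) atTop (𝓝 0) := by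
      have := tendsto_pow_atTop_nhds_zero_of_lt_one (by norm_num : (0:ℝ) ≤ 1/2)
        (by norm_num : (1/2 : ℝ) < 1)
      simpa using this.const_mul (4:ℝ)
    have hle : dist (p • z) (q • y) ≤ 0 :=
      le_of_tendsto_of_tendsto' hdt h0 (fun n => (hInv n).2.2.2.2.2.2)
    have heq : p • z = q • y := by rwa [dist_le_zero] at hle
    refine ⟨q⁻¹ * p, hclU p hpS q hqS, ?_⟩
    show (q⁻¹ * p) • z = y
    rw [mul_smul, heq, inv_smul_smul]
  have hzI := effros_lemA htrans z (V₀o.mem_nhds V₀one)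
  exact mem_nhds_iff.mpr ⟨interior (closure ((· • z) '' V₀)),
    fun u hu => key u (interior_subset hu), isOpen_interior, hzI⟩

lemma effros_isOpenMap (htrans : ∀ x y : X, ∃ g : G, g • x = y) (x : X) :
    IsOpenMap (fun g : G => g • x) := by
  intro O hO
  rw [isOpen_iff_mem_nhds]
  rintro _ ⟨g, hg, rfl⟩
  have hU : (· * g) ⁻¹' O ∈ 𝓝 (1 : G) := by
    have : Continuous fun h : G => h * g := continuous_mul_right g
    exact this.continuousAt.preimage_mem_nhds (by simpa using hO.mem_nhds hg)
  have := effros_micro htrans (g • x) hU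
  refine mem_of_superset this ?_
  rintro _ ⟨h, hh, rfl⟩
  exact ⟨h * g, hh, by show (h * g) • x = h • g • x; rw [mul_smul]⟩

end aux

/-- Effros' theorem: if a Polish group acts transitively and continuously on a compact
metric space `X`, then every stabilizer is closed and `X` is homeomorphic to the
quotient of the group by the stabilizer. -/
theorem effros_theorem {G X : Type*} [TopologicalSpace G] [Group G] [IsTopologicalGroup G]
    [PolishSpace G] [MetricSpace X] [CompactSpace X] [MulAction G X] [ContinuousSMul G X]
    (htrans : ∀ x y : X, ∃ g : G, g • x = y) (x : X) :
    IsClosed ((MulAction.stabilizer G x : Set G)) ∧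
    Nonempty ((G ⧸ MulAction.stabilizer G x) ≃ₜ X) := by
  have hc : Continuous fun g : G => g • x := continuous_id.smul continuous_const
  constructor
  · have : (MulAction.stabilizer G x : Set G) = (fun g : G => g • x) ⁻¹' {x} := by
      ext g; simp [MulAction.mem_stabilizer_iff]
    rw [this]
    exact isClosed_singleton.preimage hc
  · -- the induced map
    have hwd : ∀ a b : G, QuotientGroup.leftRel (MulAction.stabilizer G x) a b → a • x = b • x := by
      intro a b hab
      rw [QuotientGroup.leftRel_apply] at hab
      have : (a⁻¹ * b) • x = x := hab
      calc a • x = a • ((a⁻¹ * b) • x) := by rw [this]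
        _ = b • x := by rw [← mul_smul, ← mul_assoc, mul_inv_cancel, one_mul]
    let φ : G ⧸ MulAction.stabilizer G x → X := fun q => Quotient.liftOn' q (fun g => g • x) hwd
    have hφmk : ∀ g : G, φ (QuotientGroup.mk g) = g • x := fun g => rfl
    have hφc : Continuous φ := hc.quotient_liftOn' hwd
    have hbij : Function.Bijective φ := by
      constructor
      · intro q₁ q₂ h
        induction q₁ using Quotient.inductionOn' with | h a =>
        induction q₂ using Quotient.inductionOn' with | h b =>
        refine Quotient.sound' (QuotientGroup.leftRel_apply.mpr ?_)
        have hab : a • x = b • x := h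
        show (a⁻¹ * b) • x = x
        rw [mul_smul, ← hab, inv_smul_smul]
      · intro y
        obtain ⟨g, hg⟩ := htrans x y
        exact ⟨QuotientGroup.mk g, hg⟩
    have hφopen : IsOpenMap φ := by
      intro O hO
      have himg : φ '' O = (fun g : G => g • x) '' ((QuotientGroup.mk : G → G ⧸ MulAction.stabilizer G x) ⁻¹' O) := by
        ext u
        constructor
        · rintro ⟨q, hq, rfl⟩
          obtain ⟨g, rfl⟩ := QuotientGroup.mk_surjective q
          exact ⟨g, hq, rfl⟩
        · rintro ⟨g, hg, rfl⟩
          exact ⟨QuotientGroup.mk g, hg, rfl⟩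
      rw [himg]
      exact effros_isOpenMap htrans x _ (hO.preimage continuous_quotient_mk')
    exact ⟨Equiv.toHomeomorphOfContinuousOpen (Equiv.ofBijective φ hbij) hφc hφopen⟩
end

section
/- Let $G$ be a countable abelian group acting on a probability space $X$ by measure-preserving transformations $T_g$, and let $U$ be an abelian group. Suppose $f: G \times X \to U$ satisfies: (a) $f(h, T_g x) \cdot f(h,x)^{-1} = f(g, T_h x) \cdot f(g,x)^{-1}$ for all $g, h \in G$ and a.e. $x$, and (b) $f$ restricted to each generator satisfies the cocycle identity along its cyclic orbit, i.e. $\prod_{k=0}^{\mathrm{ord}(g)-1} f(g, T_g^k x) = 1$ for each generator $g$ in a fixed basis of $G = \bigoplus_i \mathbb{Z}/n_i\mathbb{Z}$. Then there exists a cocycle $\tilde f: G \times X \to U$ (i.e. $\tilde f(g+g', x) = \tilde f(g,x) \cdot \tilde f(g', T_g x)$) agreeing with $f$ on all generators. -/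
open MeasureTheory DirectSum

set_option linter.unusedSectionVars false

namespace ECaux
variable {ι : Type*} [DecidableEq ι] (n : ι → ℕ) [∀ i, NeZero (n i)]
variable {X : Type*} {U : Type*} [CommGroup U]

def E (i : ι) : ⨁ i, ZMod (n i) := DirectSum.of (fun i => ZMod (n i)) i 1

variable (T : (⨁ i, ZMod (n i)) → X → X) (f : (⨁ i, ZMod (n i)) → X → U)

def P : List ι → X → U
  | [], _ => 1
  | i :: L, x => f (E n i) x * P L (T (E n i) x)

def TT : List ι → X → X
  | [], x => x
  | i :: L, x => TT L (T (E n i) x)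

def sg (L : List ι) : ⨁ i, ZMod (n i) := (L.map (E n)).sum

@[simp] lemma P_nil (x : X) : P n T f [] x = 1 := rfl
@[simp] lemma P_cons (i : ι) (L : List ι) (x : X) :
    P n T f (i :: L) x = f (E n i) x * P n T f L (T (E n i) x) := rfl
@[simp] lemma TT_nil (x : X) : TT n T [] x = x := rfl
@[simp] lemma TT_cons (i : ι) (L : List ι) (x : X) :
    TT n T (i :: L) x = TT n T L (T (E n i) x) := rfl
@[simp] lemma sg_nil : sg n ([] : List ι) = 0 := rfl
@[simp] lemma sg_cons (i : ι) (L : List ι) : sg n (i :: L) = E n i + sg n L := by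
  simp [sg]

lemma P_append (A B : List ι) (x : X) :
    P n T f (A ++ B) x = P n T f A x * P n T f B (TT n T A x) := by
  induction A generalizing x with
  | nil => simp
  | cons i A ih => simp [ih, mul_assoc]

lemma sg_append (A B : List ι) : sg n (A ++ B) = sg n A + sg n B := by
  simp [sg]

section Meas
variable [MeasurableSpace X] {μ : Measure X}

lemma ae_T (hT : ∀ g, MeasurePreserving (T g) μ μ) (g : ⨁ i, ZMod (n i)) {p : X → Prop} (h : ∀ᵐ x ∂μ, p x) :
    ∀ᵐ x ∂μ, p (T g x) :=
  (hT g).quasiMeasurePreserving.tendsto_ae.eventually h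

lemma TT_mp (hT : ∀ g, MeasurePreserving (T g) μ μ) : ∀ A : List ι, MeasurePreserving (TT n T A) μ μ := by
  intro A
  induction A with
  | nil => exact MeasurePreserving.id μ
  | cons i A ih => exact ih.comp (hT (E n i))

lemma ae_TT (hT : ∀ g, MeasurePreserving (T g) μ μ) (A : List ι) {p : X → Prop} (h : ∀ᵐ x ∂μ, p x) :
    ∀ᵐ x ∂μ, p (TT n T A x) :=
  (TT_mp n T hT A).quasiMeasurePreserving.tendsto_ae.eventually h

end Meas

section Iter

lemma iter_succ (hTadd : ∀ g h : ⨁ i, ZMod (n i), ∀ x, T (g + h) x = T g (T h x)) (i : ι) : ∀ (k : ℕ) (x : X),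
    (T (E n i))^[k + 1] x = T ((k + 1) • E n i) x := by
  intro k
  induction k with
  | zero => intro x; simp
  | succ k ih =>
    intro x
    rw [Function.iterate_succ_apply, ih (T (E n i) x),
      show (k + 1 + 1) • E n i = (k + 1) • E n i + E n i from succ_nsmul _ _, hTadd]

lemma nsmul_E (i : ι) : (n i) • E n i = 0 := by
  simp [E, ← map_nsmul, nsmul_eq_mul, ZMod.natCast_self]

lemma iter_n (hTadd : ∀ g h : ⨁ i, ZMod (n i), ∀ x, T (g + h) x = T g (T h x)) (i : ι) (x : X) : (T (E n i))^[n i] x = T 0 x := by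
  obtain ⟨k, hk⟩ : ∃ k, n i = k + 1 := ⟨n i - 1, (Nat.succ_pred_eq_of_pos (NeZero.pos _)).symm⟩
  rw [hk, iter_succ n T hTadd, ← hk, nsmul_E]

lemma P_replicate (i : ι) : ∀ (m : ℕ) (x : X),
    P n T f (List.replicate m i) x
      = ∏ k ∈ Finset.range m, f (E n i) ((T (E n i))^[k] x) := by
  intro m
  induction m with
  | zero => intro x; simp
  | succ m ih =>
    intro x
    rw [List.replicate_succ, P_cons, ih (T (E n i) x), Finset.prod_range_succ']
    simp only [← Function.iterate_succ_apply, Function.iterate_zero_apply]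
    rw [mul_comm]

end Iter

section AE
variable [MeasurableSpace X] {μ : Measure X}
variable (hT : ∀ g, MeasurePreserving (T g) μ μ)
variable (hTadd : ∀ g h : ⨁ i, ZMod (n i), ∀ x, T (g + h) x = T g (T h x))
variable (hb : ∀ i : ι, ∀ᵐ x ∂μ, ∏ k ∈ Finset.range (n i),
      f (DirectSum.of (fun i => ZMod (n i)) i 1)
        ((T (DirectSum.of (fun i => ZMod (n i)) i 1))^[k] x) = 1)

include hT hTadd hb in
lemma inv_letter (i : ι) : ∀ᵐ x ∂μ, f (E n i) (T 0 x) = f (E n i) x := by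
  have hb' : ∀ᵐ x ∂μ, ∏ k ∈ Finset.range (n i), f (E n i) ((T (E n i))^[k] x) = 1 := hb i
  filter_upwards [hb', ae_T n T hT (E n i) hb'] with x hx hx2
  simp only [← Function.iterate_succ_apply, Nat.succ_eq_add_one] at hx2
  have e := (Finset.prod_range_succ' (fun k => f (E n i) ((T (E n i))^[k] x)) (n i)).symm.trans
    (Finset.prod_range_succ (fun k => f (E n i) ((T (E n i))^[k] x)) (n i))
  beta_reduce at e
  rw [hx, hx2, one_mul, one_mul, Function.iterate_zero_apply, iter_n n T hTadd] at e
  exact e.symm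

include hT hTadd hb in
lemma inv_P : ∀ B : List ι, ∀ᵐ x ∂μ, P n T f B (T 0 x) = P n T f B x := by
  intro B
  induction B with
  | nil => exact Filter.Eventually.of_forall fun x => rfl
  | cons i L ih =>
    filter_upwards [inv_letter n T f hT hTadd hb i, ae_T n T hT (E n i) ih] with x hx hx2
    have hc : T (E n i) (T 0 x) = T 0 (T (E n i) x) := by
      rw [← hTadd, add_comm, hTadd]
    rw [P_cons, P_cons, hx, hc, hx2]

include hT hTadd hb in
lemma TT_sg (A B : List ι) :
    ∀ᵐ x ∂μ, P n T f B (TT n T A x) = P n T f B (T (sg n A) x) := by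
  induction A with
  | nil =>
    filter_upwards [inv_P n T f hT hTadd hb B] with x hx
    simp [hx.symm]
  | cons i A ih =>
    filter_upwards [ae_T n T hT (E n i) ih] with x hx
    rw [TT_cons, hx, sg_cons, add_comm, hTadd]

include hT hTadd in
lemma perm_P (ha : ∀ g h : ⨁ i, ZMod (n i), ∀ᵐ x ∂μ,
      f h (T g x) * (f h x)⁻¹ = f g (T h x) * (f g x)⁻¹)
    {L M : List ι} (h : L.Perm M) : ∀ᵐ x ∂μ, P n T f L x = P n T f M x := by
  induction h with
  | nil => exact Filter.Eventually.of_forall fun x => rfl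
  | cons i h ih =>
    filter_upwards [ae_T n T hT (E n i) ih] with x hx
    rw [P_cons, P_cons, hx]
  | swap a b L =>
    filter_upwards [ha (E n a) (E n b)] with x hx
    have hx' : f (E n b) (T (E n a) x) * f (E n a) x
        = f (E n a) (T (E n b) x) * f (E n b) x := by
      rw [← div_eq_div_iff_mul_eq_mul, div_eq_mul_inv, div_eq_mul_inv]; exact hx
    have key : f (E n b) x * f (E n a) (T (E n b) x)
        = f (E n a) x * f (E n b) (T (E n a) x) := by
      rw [mul_comm (f (E n b) x) _, mul_comm (f (E n a) x) _]; exact hx'.symm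
    have hc : T (E n a) (T (E n b) x) = T (E n b) (T (E n a) x) := by
      rw [← hTadd, ← hTadd, add_comm]
    simp only [P_cons]
    rw [hc, ← mul_assoc, ← mul_assoc, key]
  | trans h1 h2 ih1 ih2 =>
    filter_upwards [ih1, ih2] with x e1 e2
    exact e1.trans e2

include hT hb in
lemma cyc (i : ι) : ∀ᵐ x ∂μ, P n T f (List.replicate (n i) i) x = 1 := by
  filter_upwards [hb i] with x hx
  rw [P_replicate]; exact hx

include hT hb in
lemma cyc_mul (i : ι) (c : ℕ) :
    ∀ᵐ x ∂μ, P n T f (List.replicate (c * n i) i) x = 1 := by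
  induction c with
  | zero => exact Filter.Eventually.of_forall fun x => by simp
  | succ c ih =>
    filter_upwards [ih,
      ae_TT n T hT (List.replicate (c * n i) i) (cyc n T f hT hb i)] with x h1 h2
    rw [Nat.succ_mul, List.replicate_add, P_append, h1, h2, one_mul]

include hT hb in
lemma D_one : ∀ (s : List ι) (m : ι → ℕ), (∀ i ∈ s, n i ∣ m i) →
    ∀ᵐ x ∂μ, P n T f (s.flatMap fun i => List.replicate (m i) i) x = 1 := by
  intro s
  induction s with
  | nil => intro m _; exact Filter.Eventually.of_forall fun x => rfl
  | cons i s ih =>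
    intro m hm
    obtain ⟨c, hc⟩ := hm i List.mem_cons_self
    have hrep : ∀ᵐ x ∂μ, P n T f (List.replicate (m i) i) x = 1 := by
      rw [hc, Nat.mul_comm]; exact cyc_mul n T f hT hb i c
    have hrest := ih m (fun j hj => hm j (List.mem_cons_of_mem i hj))
    filter_upwards [hrep, ae_TT n T hT (List.replicate (m i) i) hrest] with x h1 h2
    rw [List.flatMap_cons, P_append, h1, h2, one_mul]

end AE

section Word

noncomputable def word (g : ⨁ i, ZMod (n i)) : List ι :=
  (DFinsupp.support g).toList.flatMap fun j => List.replicate ((g j).val) j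

lemma count_flat (l : List ι) (hl : l.Nodup) (m : ι → ℕ) (i : ι) :
    (l.flatMap fun j => List.replicate (m j) j).count i = if i ∈ l then m i else 0 := by
  induction l with
  | nil => simp
  | cons a l ih =>
    rw [List.nodup_cons] at hl
    by_cases h : i = a
    · subst h
      simp [List.flatMap_cons, List.count_append, List.count_replicate, ih hl.2, hl.1]
    · simp [List.flatMap_cons, List.count_append, List.count_replicate, ih hl.2, h,
        Ne.symm h]

lemma count_word (g : ⨁ i, ZMod (n i)) (i : ι) : (word n g).count i = (g i).val := by
  rw [word, count_flat _ (Finset.nodup_toList _)]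
  split_ifs with h
  · rfl
  · rw [Finset.mem_toList, DFinsupp.mem_support_iff] at h
    push_neg at h
    rw [h, ZMod.val_zero]

lemma sg_replicate (k : ℕ) (j : ι) : sg n (List.replicate k j) = k • E n j := by
  induction k with
  | zero => simp
  | succ k ih => rw [List.replicate_succ, sg_cons, ih, succ_nsmul, add_comm]

lemma sg_flat (l : List ι) (m : ι → ℕ) :
    sg n (l.flatMap fun j => List.replicate (m j) j) = (l.map fun j => m j • E n j).sum := by
  induction l with
  | nil => simp [sg]
  | cons a l ih => rw [List.flatMap_cons, sg_append, sg_replicate, ih, List.map_cons,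
      List.sum_cons]

lemma sg_word (g : ⨁ i, ZMod (n i)) : sg n (word n g) = g := by
  rw [word, sg_flat]
  have h1 : ∀ j : ι, (g j).val • E n j = DirectSum.of (fun i => ZMod (n i)) j (g j) := by
    intro j
    rw [E, ← map_nsmul]
    congr 1
    rw [nsmul_eq_mul, mul_one]
    exact ZMod.natCast_rightInverse (g j)
  simp only [h1]
  rw [Finset.sum_map_toList]
  exact DirectSum.sum_support_of g

end Word
end ECaux

open ECaux in
/-- If a function `f : G × X → U` on a system over `G = ⨁ᵢ ℤ/nᵢℤ` satisfies the
commutation condition (a) and the closing-up condition (b) along the cyclic orbit of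
each generator, then there is a genuine cocycle agreeing with `f` on all generators. -/
theorem exists_cocycle_agreeing_on_generators
    {ι : Type*} [DecidableEq ι] [Countable ι] (n : ι → ℕ) [∀ i, NeZero (n i)]
    {X : Type*} [MeasurableSpace X] (μ : Measure X) [IsProbabilityMeasure μ]
    {U : Type*} [CommGroup U]
    (T : (⨁ i, ZMod (n i)) → X → X)
    (hT : ∀ g, MeasurePreserving (T g) μ μ)
    (hTadd : ∀ g h : ⨁ i, ZMod (n i), ∀ x, T (g + h) x = T g (T h x))
    (f : (⨁ i, ZMod (n i)) → X → U)
    (ha : ∀ g h : ⨁ i, ZMod (n i), ∀ᵐ x ∂μ,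
      f h (T g x) * (f h x)⁻¹ = f g (T h x) * (f g x)⁻¹)
    (hb : ∀ i : ι, ∀ᵐ x ∂μ, ∏ k ∈ Finset.range (n i),
      f (DirectSum.of (fun i => ZMod (n i)) i 1)
        ((T (DirectSum.of (fun i => ZMod (n i)) i 1))^[k] x) = 1) :
    ∃ f' : (⨁ i, ZMod (n i)) → X → U,
      (∀ g g' : ⨁ i, ZMod (n i), ∀ᵐ x ∂μ, f' (g + g') x = f' g x * f' g' (T g x)) ∧
      (∀ i : ι, ∀ᵐ x ∂μ,
        f' (DirectSum.of (fun i => ZMod (n i)) i 1) x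
          = f (DirectSum.of (fun i => ZMod (n i)) i 1) x) := by
  refine ⟨fun g x => P n T f (word n g) x, ?_, ?_⟩
  · intro g g'
    set s : List ι := (DFinsupp.support g ∪ DFinsupp.support g').toList with hs
    set d : ι → ℕ := fun i => n i * (((g i).val + ((g' i)).val) / n i) with hd
    have hdvd : ∀ i ∈ s, n i ∣ d i := fun i _ => dvd_mul_right _ _
    have hperm : (word n (g + g') ++ s.flatMap fun i => List.replicate (d i) i).Perm
        (word n g ++ word n g') := by
      rw [List.perm_iff_count]
      intro a
      rw [List.count_append, List.count_append, count_word, count_word, count_word,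
        count_flat s (Finset.nodup_toList _)]
      have hadd : (g + g') a = g a + g' a := DirectSum.add_apply g g' a
      by_cases hmem : a ∈ s
      · rw [if_pos hmem, hadd, ZMod.val_add, hd]
        exact Nat.mod_add_div _ _
      · rw [if_neg hmem]
        have h0 : g a = 0 ∧ g' a = 0 := by
          rw [hs, Finset.mem_toList, Finset.mem_union] at hmem
          push_neg at hmem
          rw [DFinsupp.mem_support_iff, DFinsupp.mem_support_iff] at hmem
          push_neg at hmem
          exact hmem
        rw [hadd, h0.1, h0.2]
        simp
    have h1 := perm_P n T f hT hTadd ha hperm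
    have h2 := ae_TT n T hT (word n (g + g')) (D_one n T f hT hb s d hdvd)
    have h3 := TT_sg n T f hT hTadd hb (word n g) (word n g')
    simp only [sg_word] at h3
    filter_upwards [h1, h2, h3] with x e1 e2 e3
    rw [P_append, e2, mul_one] at e1
    rw [P_append] at e1
    rw [e3] at e1
    exact e1
  · intro i
    show ∀ᵐ x ∂μ, P n T f (word n (E n i)) x = f (E n i) x
    by_cases h1 : n i = 1
    · have hz : (1 : ZMod (n i)) = 0 := by
        haveI : Subsingleton (ZMod (n i)) := by rw [h1]; infer_instance
        exact Subsingleton.elim _ _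
      have hE : E n i = 0 := by rw [E, hz, map_zero]
      have hw : word n (E n i) = [] := by
        rw [hE, word]
        simp
      rw [hw]
      filter_upwards [hb i] with x hx
      have hr : Finset.range (n i) = {0} := by rw [h1]; rfl
      rw [hr, Finset.prod_singleton, Function.iterate_zero_apply] at hx
      rw [P_nil]
      exact hx.symm
    · have h2 : 1 < n i := Nat.lt_of_le_of_ne NeZero.one_le (Ne.symm h1)
      haveI : Fact (1 < n i) := ⟨h2⟩
      have hne : (1 : ZMod (n i)) ≠ 0 := by
        intro hc
        have := congrArg ZMod.val hc
        rw [ZMod.val_one, ZMod.val_zero] at this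
        exact one_ne_zero this
      have hw : word n (E n i) = [i] := by
        rw [word]
        have hsupp : DFinsupp.support (E n i) = {i} := DFinsupp.support_single_ne_zero hne
        rw [hsupp, Finset.toList_singleton, List.flatMap_cons]
        have hv : ((E n i) i).val = 1 := by
          rw [show (E n i) i = (1 : ZMod (n i)) from DirectSum.of_eq_same i 1, ZMod.val_one]
        rw [hv, List.replicate_one]
        simp
      rw [hw]
      exact Filter.Eventually.of_forall fun x => by simp
end

section
/- Let $X$ be an ergodic $G$-system for a countable abelian group $G$, and let $d \geq 1$. If $\phi, \psi: X \to S^1$ are phase polynomials of degree $< d$ such that $\phi/\psi$ is not a.e. constant, then $\|\phi - \psi\|_{L^2(X)} \geq \sqrt{2}/2^{d-2}$. -/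
open MeasureTheory

noncomputable instance : MeasurableSpace Circle := borel Circle
instance : BorelSpace Circle := ⟨rfl⟩

variable {G X : Type*}

/-- The derivative `Δ_h φ (x) = φ(T_h x) · φ(x)⁻¹` of a circle-valued function. -/
noncomputable def polyDisc (T : G → X → X) (h : G) (φ : X → Circle) : X → Circle :=
  fun x => φ (T h x) * (φ x)⁻¹

/-- `φ : X → S¹` is a phase polynomial of degree `< d`: all `d`-fold iterated
derivatives are a.e. equal to `1`. -/
def IsPhasePoly [MeasurableSpace X] (μ : Measure X) (T : G → X → X)
    (d : ℕ) (φ : X → Circle) : Prop :=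
  ∀ hs : Fin d → G, ∀ᵐ x ∂μ, (List.ofFn hs).foldr (polyDisc T) φ x = 1

/-! ### Auxiliary lemmas -/

lemma circle_coe_meas : Measurable (fun z : Circle => (z : ℂ)) := by
  apply Continuous.measurable
  exact continuous_subtype_val

lemma polyDisc_comm {T : G → X → X} (hTc : ∀ g h x, T g (T h x) = T h (T g x))
    (g h : G) (f : X → Circle) :
    polyDisc T g (polyDisc T h f) = polyDisc T h (polyDisc T g f) := by
  funext x
  simp only [polyDisc, hTc g h x, mul_inv, inv_inv]
  exact mul_mul_mul_comm _ _ _ _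

lemma foldr_polyDisc_swap {T : G → X → X} (hTc : ∀ g h x, T g (T h x) = T h (T g x))
    (h : G) (f : X → Circle) :
    ∀ l : List G, l.foldr (polyDisc T) (polyDisc T h f) = polyDisc T h (l.foldr (polyDisc T) f)
  | [] => rfl
  | (g :: l) => by
    simp only [List.foldr_cons, foldr_polyDisc_swap hTc h f l, polyDisc_comm hTc g h]

lemma foldr_polyDisc_mul_inv {T : G → X → X} (φ ψ : X → Circle) :
    ∀ l : List G, l.foldr (polyDisc T) (fun x => φ x * (ψ x)⁻¹)
      = fun x => l.foldr (polyDisc T) φ x * (l.foldr (polyDisc T) ψ x)⁻¹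
  | [] => rfl
  | (g :: l) => by
    funext x
    simp only [List.foldr_cons, foldr_polyDisc_mul_inv φ ψ l, polyDisc, mul_inv, inv_inv]
    exact mul_mul_mul_comm _ _ _ _

lemma polyDisc_measurable [MeasurableSpace X] {T : G → X → X} {f : X → Circle}
    (hf : Measurable f) {h : G} (hTh : Measurable (T h)) :
    Measurable (polyDisc T h f) :=
  (hf.comp hTh).mul hf.inv

section ZeroOne

variable [AddCommGroup G] [Countable G] [MeasurableSpace X]
variable {μ : Measure X} {T : G → X → X}

lemma zeroOne (hT : ∀ g, MeasurePreserving (T g) μ μ)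
    (hTadd : ∀ g h : G, ∀ x, T (g + h) x = T g (T h x))
    (hErg : ∀ s : Set X, MeasurableSet s → (∀ g, T g ⁻¹' s = s) → μ s = 0 ∨ μ s = 1)
    {s : Set X} (hs : MeasurableSet s)
    (hinv : ∀ g, μ (((T g ⁻¹' s) \ s) ∪ (s \ (T g ⁻¹' s))) = 0) :
    μ s = 0 ∨ μ s = 1 := by
  set t := ⋂ g, T g ⁻¹' s with ht
  have htm : MeasurableSet t := MeasurableSet.iInter fun g => (hT g).measurable hs
  have htinv : ∀ h, T h ⁻¹' t = t := by
    intro h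
    ext x
    simp only [ht, Set.mem_preimage, Set.mem_iInter]
    constructor
    · intro H g
      have := H (g - h)
      rwa [← hTadd, sub_add_cancel] at this
    · intro H g
      rw [← hTadd]
      exact H (g + h)
  have h1 : μ (t \ s) = 0 := by
    refine measure_mono_null ?_ (hinv 0)
    intro x hx
    exact Or.inl ⟨Set.mem_iInter.1 hx.1 0, hx.2⟩
  have h2 : μ (s \ t) = 0 := by
    refine measure_mono_null ?_ (measure_iUnion_null hinv)
    intro x hx
    have hex : ∃ g, x ∉ T g ⁻¹' s := by
      by_contra hcon
      push_neg at hcon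
      exact hx.2 (Set.mem_iInter.2 hcon)
    obtain ⟨g, hg⟩ := hex
    exact Set.mem_iUnion.2 ⟨g, Or.inr ⟨hx.1, hg⟩⟩
  have hst : μ s = μ t := measure_congr (MeasureTheory.ae_eq_set.2 ⟨h2, h1⟩)
  rw [hst]
  exact hErg t htm htinv

lemma aeConst [IsProbabilityMeasure μ]
    (hT : ∀ g, MeasurePreserving (T g) μ μ)
    (hTadd : ∀ g h : G, ∀ x, T (g + h) x = T g (T h x))
    (hErg : ∀ s : Set X, MeasurableSet s → (∀ g, T g ⁻¹' s = s) → μ s = 0 ∨ μ s = 1)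
    {f : X → Circle} (hf : Measurable f)
    (hinv : ∀ g, ∀ᵐ x ∂μ, f (T g x) = f x) :
    ∃ c : Circle, ∀ᵐ x ∂μ, f x = c := by
  classical
  obtain ⟨b, hbc, -, hb⟩ := TopologicalSpace.exists_countable_basis Circle
  have key : ∀ u : Set Circle, MeasurableSet u → μ (f ⁻¹' u) = 0 ∨ μ (f ⁻¹' u) = 1 := by
    intro u hu
    refine zeroOne hT hTadd hErg (hf hu) fun g => ?_
    have hnull : μ {x | ¬ f (T g x) = f x} = 0 := by
      have := hinv g
      rwa [MeasureTheory.ae_iff] at this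
    refine measure_mono_null ?_ hnull
    rintro x (⟨hx1, hx2⟩ | ⟨hx1, hx2⟩) <;> simp only [Set.mem_setOf_eq] <;> intro hfe
    · exact hx2 (show f x ∈ u by rw [← hfe]; exact hx1)
    · exact hx2 (show f (T g x) ∈ u by rw [hfe]; exact hx1)
  set S : Set (Set Circle) := {u ∈ b | μ (f ⁻¹' u) = 0} with hS
  have hVnull : μ (f ⁻¹' ⋃₀ S) = 0 := by
    rw [Set.sUnion_eq_biUnion, Set.preimage_iUnion₂]
    rw [measure_biUnion_null_iff (hbc.mono (Set.sep_subset _ _))]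
    exact fun u hu => hu.2
  have hae : ∀ᵐ x ∂μ, f x ∉ ⋃₀ S := by
    rw [MeasureTheory.ae_iff]
    simp only [not_not]
    exact hVnull
  have huniq : ∀ y z : Circle, y ∉ ⋃₀ S → z ∉ ⋃₀ S → y = z := by
    intro y z hy hz
    by_contra hne
    obtain ⟨u, v, hu, hv, hyu, hzv, huv⟩ := t2_separation hne
    obtain ⟨u', hu'b, hyu', hu'sub⟩ := hb.exists_subset_of_mem_open hyu hu
    obtain ⟨v', hv'b, hzv', hv'sub⟩ := hb.exists_subset_of_mem_open hzv hv
    have hu'pos : μ (f ⁻¹' u') ≠ 0 := fun h0 => hy (Set.mem_sUnion.2 ⟨u', ⟨hu'b, h0⟩, hyu'⟩)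
    have hv'pos : μ (f ⁻¹' v') ≠ 0 := fun h0 => hz (Set.mem_sUnion.2 ⟨v', ⟨hv'b, h0⟩, hzv'⟩)
    have hu1 : μ (f ⁻¹' u') = 1 :=
      (key u' (hb.isOpen hu'b).measurableSet).resolve_left hu'pos
    have hcompl : μ ((f ⁻¹' u')ᶜ) = 0 := by
      have := measure_compl (hf (hb.isOpen hu'b).measurableSet) (measure_ne_top μ _)
      rw [hu1, measure_univ] at this
      simpa using this
    refine hv'pos (measure_mono_null ?_ hcompl)
    intro x hx hx'
    exact Set.notMem_empty (f x) (huv.le_bot ⟨hu'sub hx', hv'sub hx⟩)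
  have hne : (Filter.NeBot (ae μ)) := MeasureTheory.ae_neBot.2 (IsProbabilityMeasure.ne_zero μ)
  obtain ⟨x₀, hx₀⟩ := hae.exists
  refine ⟨f x₀, ?_⟩
  filter_upwards [hae] with x hx
  exact huniq _ _ hx hx₀

end ZeroOne

section Integrals

variable [MeasurableSpace X] {μ : Measure X}

lemma circle_abs_sq (z : Circle) : ‖(z:ℂ) - 1‖ ^ 2 = 2 - 2 * (z:ℂ).re := by
  have h := Complex.sq_norm (z:ℂ)
  rw [Circle.norm_coe, Complex.normSq_apply] at h
  rw [Complex.sq_norm, Complex.normSq_apply]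
  simp only [Complex.sub_re, Complex.sub_im, Complex.one_re, Complex.one_im]
  nlinarith [h]

lemma absSq_meas {ρ : X → Circle} (hρ : Measurable ρ) :
    Measurable (fun x => ‖(ρ x : ℂ) - 1‖ ^ 2) :=
  (continuous_norm.measurable.comp ((circle_coe_meas.comp hρ).sub measurable_const)).pow_const 2

lemma integrable_coe [IsProbabilityMeasure μ] {ρ : X → Circle} (hρ : Measurable ρ) :
    Integrable (fun x => (ρ x : ℂ)) μ := by
  refine Integrable.mono' (integrable_const 1) (circle_coe_meas.comp hρ).aestronglyMeasurable
    (Filter.Eventually.of_forall fun x => ?_)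
  exact (Circle.norm_coe _).le

lemma integrable_absSq [IsProbabilityMeasure μ] {ρ : X → Circle} (hρ : Measurable ρ) :
    Integrable (fun x => ‖(ρ x : ℂ) - 1‖ ^ 2) μ := by
  refine Integrable.mono' (integrable_const 4) (absSq_meas hρ).aestronglyMeasurable
    (Filter.Eventually.of_forall fun x => ?_)
  have h1 : ‖(ρ x : ℂ) - 1‖ ≤ 2 := by
    calc ‖(ρ x : ℂ) - 1‖ ≤ ‖(ρ x : ℂ)‖ + ‖(1 : ℂ)‖ := norm_sub_le _ _
    _ = 2 := by rw [Circle.norm_coe]; norm_num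
  have h0 : (0:ℝ) ≤ ‖(ρ x : ℂ) - 1‖ := norm_nonneg _
  rw [Real.norm_eq_abs, abs_of_nonneg (by positivity)]
  nlinarith

/-- `∫ |ρ - 1|² = 2 - 2 Re ∫ ρ`. -/
lemma integral_absSq_eq [IsProbabilityMeasure μ] {ρ : X → Circle} (hρ : Measurable ρ) :
    ∫ x, ‖(ρ x : ℂ) - 1‖ ^ 2 ∂μ = 2 - 2 * (∫ x, (ρ x : ℂ) ∂μ).re := by
  have h1 : ∫ x, ‖(ρ x : ℂ) - 1‖ ^ 2 ∂μ = ∫ x, (2 - 2 * ((ρ x : ℂ)).re) ∂μ := by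
    congr 1
    funext x
    exact circle_abs_sq (ρ x)
  rw [h1]
  have hre : Integrable (fun x => ((ρ x : ℂ)).re) μ := (integrable_coe hρ).re
  rw [integral_sub (integrable_const 2) (hre.const_mul 2), integral_const_mul]
  have h2 : ∫ x, ((ρ x : ℂ)).re ∂μ = (∫ x, (ρ x : ℂ) ∂μ).re := by
    have := integral_re (μ := μ) (f := fun x => (ρ x : ℂ)) (integrable_coe hρ)
    simpa using this
  rw [h2]
  simp

lemma integral_comp_measurePreserving {Y : Type*} {ν : Measure X} {f : X → X}
    (hf : MeasurePreserving f ν ν) [NormedAddCommGroup Y] [NormedSpace ℝ Y]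
    {g : X → Y} (hg : AEStronglyMeasurable g ν) :
    ∫ x, g (f x) ∂ν = ∫ x, g x ∂ν := by
  rw [← MeasureTheory.integral_map hf.measurable.aemeasurable (by rwa [hf.map_eq]), hf.map_eq]

end Integrals

section Main

variable [AddCommGroup G] [Countable G] [MeasurableSpace X]
variable {μ : Measure X} {T : G → X → X}

lemma key_bound [IsProbabilityMeasure μ]
    (hT : ∀ g, MeasurePreserving (T g) μ μ)
    (hTadd : ∀ g h : G, ∀ x, T (g + h) x = T g (T h x))
    (hErg : ∀ s : Set X, MeasurableSet s → (∀ g, T g ⁻¹' s = s) → μ s = 0 ∨ μ s = 1)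
    (d : ℕ) (hd : 1 ≤ d) :
    ∀ ρ : X → Circle, Measurable ρ → IsPhasePoly μ T d ρ →
      (¬ ∃ c : Circle, ∀ᵐ x ∂μ, ρ x = c) →
      2 / (4:ℝ) ^ ((d:ℝ) - 2) ≤ ∫ x, ‖(ρ x : ℂ) - 1‖ ^ 2 ∂μ := by
  have hTc : ∀ g h x, T g (T h x) = T h (T g x) := by
    intro g h x
    rw [← hTadd, ← hTadd, add_comm]
  induction d, hd using Nat.le_induction with
  | base =>
    intro ρ hρm hρp hnc
    exfalso
    apply hnc
    refine aeConst hT hTadd hErg hρm fun g => ?_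
    have := hρp (fun _ => g)
    filter_upwards [this] with x hx
    simp only [List.ofFn_succ, List.ofFn_zero, List.foldr_cons, List.foldr_nil] at hx
    have hx' : ρ (T g x) * (ρ x)⁻¹ = 1 := hx
    rwa [mul_inv_eq_one] at hx'
  | succ d hd1 IH =>
    intro ρ hρm hρp hnc
    set σ : G → X → Circle := fun h => polyDisc T h ρ with hσ
    have hσm : ∀ h, Measurable (σ h) := fun h => polyDisc_measurable hρm (hT h).measurable
    have hσp : ∀ h, IsPhasePoly μ T d (σ h) := by
      intro h hs
      have hrw : (List.ofFn (Fin.cons h hs)).foldr (polyDisc T) ρ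
          = (List.ofFn hs).foldr (polyDisc T) (polyDisc T h ρ) := by
        rw [List.ofFn_succ]
        simp only [Fin.cons_zero, Fin.cons_succ, List.foldr_cons]
        exact (foldr_polyDisc_swap hTc h ρ _).symm
      have hpp := hρp (Fin.cons h hs)
      rw [hrw] at hpp
      exact hpp
    by_cases hcase : ∀ h : G, ∃ c : Circle, ∀ᵐ x ∂μ, σ h x = c
    · -- all derivatives constant
      choose c hc using hcase
      by_cases hc1 : ∀ h, c h = 1
      · exfalso
        apply hnc
        refine aeConst hT hTadd hErg hρm fun g => ?_
        filter_upwards [hc g] with x hx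
        rw [hc1 g] at hx
        have hx' : ρ (T g x) * (ρ x)⁻¹ = 1 := hx
        rwa [mul_inv_eq_one] at hx'
      · push_neg at hc1
        obtain ⟨h, hch⟩ := hc1
        have hI : ∫ x, (ρ x : ℂ) ∂μ = (c h : ℂ) * ∫ x, (ρ x : ℂ) ∂μ := by
          have hcomp : ∫ x, (ρ (T h x) : ℂ) ∂μ = ∫ x, (ρ x : ℂ) ∂μ :=
            integral_comp_measurePreserving (hT h)
              (circle_coe_meas.comp hρm).aestronglyMeasurable
          have hcong : ∫ x, (ρ (T h x) : ℂ) ∂μ = ∫ x, (c h : ℂ) * (ρ x : ℂ) ∂μ := by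
            refine integral_congr_ae ?_
            filter_upwards [hc h] with x hx
            have hval : ρ (T h x) = σ h x * ρ x := by
              simp [hσ, polyDisc, inv_mul_cancel_right]
            rw [hval, hx, Circle.coe_mul]
          calc ∫ x, (ρ x : ℂ) ∂μ = ∫ x, (ρ (T h x) : ℂ) ∂μ := hcomp.symm
          _ = ∫ x, (c h : ℂ) * (ρ x : ℂ) ∂μ := hcong
          _ = (c h : ℂ) * ∫ x, (ρ x : ℂ) ∂μ := integral_const_mul _ _
        have hI0 : ∫ x, (ρ x : ℂ) ∂μ = 0 := by
          have hz : ((c h : ℂ) - 1) * ∫ x, (ρ x : ℂ) ∂μ = 0 := by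
            rw [sub_mul, one_mul, ← hI, sub_self]
          rcases mul_eq_zero.1 hz with h0 | h0
          · exfalso
            apply hch
            have hce : (c h : ℂ) = 1 := sub_eq_zero.1 h0
            exact Circle.coe_injective (by rw [hce, Circle.coe_one])
          · exact h0
        rw [integral_absSq_eq hρm, hI0]
        simp only [Complex.zero_re, mul_zero, sub_zero]
        have hcast : ((d + 1 : ℕ) : ℝ) - 2 = (d : ℝ) - 1 := by push_cast; ring
        rw [hcast]
        have h4 : (1:ℝ) ≤ (4:ℝ) ^ ((d:ℝ) - 1) := by
          apply Real.one_le_rpow (by norm_num)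
          have : (1:ℝ) ≤ (d:ℝ) := by exact_mod_cast hd1
          linarith
        exact div_le_self (by norm_num) h4
    · -- some derivative nonconstant
      push_neg at hcase
      obtain ⟨h, hh⟩ := hcase
      have hnc' : ¬ ∃ ch : Circle, ∀ᵐ x ∂μ, σ h x = ch := fun ⟨ch, hcc⟩ => hh ch (hcc.mono fun x hx hne => hne hx)
      have hIH := IH (σ h) (hσm h) (hσp h) hnc'
      have hρTm : Measurable (fun x => ρ (T h x)) := hρm.comp (hT h).measurable
      have hEcomp : ∫ x, ‖(ρ (T h x) : ℂ) - 1‖ ^ 2 ∂μ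
          = ∫ x, ‖(ρ x : ℂ) - 1‖ ^ 2 ∂μ :=
        integral_comp_measurePreserving (hT h) (absSq_meas hρm).aestronglyMeasurable
      have hpt : ∀ x, ‖(σ h x : ℂ) - 1‖ ^ 2
          ≤ 2 * ‖(ρ (T h x) : ℂ) - 1‖ ^ 2 + 2 * ‖(ρ x : ℂ) - 1‖ ^ 2 := by
        intro x
        set a := (ρ (T h x) : ℂ) with ha
        set bb := (ρ x : ℂ) with hbb
        have h1 : ‖(σ h x : ℂ) - 1‖ = ‖a - bb‖ := by
          have hσx : (σ h x : ℂ) = a * bb⁻¹ := by simp [hσ, polyDisc, ha, hbb]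
          have hbne : bb ≠ 0 := Circle.coe_ne_zero _
          have heq : a - bb = ((σ h x : ℂ) - 1) * bb := by
            rw [hσx]; field_simp
          rw [heq, norm_mul]
          rw [hbb, Circle.norm_coe, mul_one]
        have htri : ‖a - bb‖ ≤ ‖a - 1‖ + ‖bb - 1‖ := by
          have ht := norm_sub_le_norm_sub_add_norm_sub a 1 bb
          have hsw : ‖1 - bb‖ = ‖bb - 1‖ := norm_sub_rev _ _
          rw [hsw] at ht
          exact ht
        rw [h1]
        have hsq : ‖a - bb‖ ^ 2
            ≤ (‖a - 1‖ + ‖bb - 1‖) ^ 2 :=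
          pow_le_pow_left₀ (norm_nonneg _) htri 2
        nlinarith [hsq, sq_nonneg (‖a - 1‖ - ‖bb - 1‖)]
      have hint : ∫ x, ‖(σ h x : ℂ) - 1‖ ^ 2 ∂μ
          ≤ 4 * ∫ x, ‖(ρ x : ℂ) - 1‖ ^ 2 ∂μ := by
        have hmono := integral_mono (μ := μ) (integrable_absSq (hσm h))
          (((integrable_absSq hρTm).const_mul 2).add ((integrable_absSq hρm).const_mul 2)) hpt
        simp only [Pi.add_apply] at hmono
        rw [integral_add ((integrable_absSq hρTm).const_mul 2)
          ((integrable_absSq hρm).const_mul 2), integral_const_mul, integral_const_mul,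
          hEcomp] at hmono
        linarith
      have ha4 : (0:ℝ) < (4:ℝ) ^ ((d:ℝ) - 2) := Real.rpow_pos_of_pos (by norm_num) _
      have hcast : ((d + 1 : ℕ) : ℝ) - 2 = ((d:ℝ) - 2) + 1 := by push_cast; ring
      rw [hcast, Real.rpow_add_one (by norm_num : (4:ℝ) ≠ 0)]
      have htrans : 2 / (4:ℝ) ^ ((d:ℝ) - 2) ≤ 4 * ∫ x, ‖(ρ x : ℂ) - 1‖ ^ 2 ∂μ :=
        le_trans hIH hint
      rw [div_le_iff₀ ha4] at htrans
      rw [div_le_iff₀ (by positivity)]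
      nlinarith [htrans]

end Main

/-- Separation lemma: on an ergodic `G`-system, two phase polynomials of degree `< d`
whose ratio is not a.e. constant are at `L²`-distance at least `√2 / 2^(d-2)`. -/
theorem phase_polynomial_separation
    [AddCommGroup G] [Countable G]
    [MeasurableSpace X] (μ : Measure X) [IsProbabilityMeasure μ]
    (T : G → X → X) (hT : ∀ g, MeasurePreserving (T g) μ μ)
    (hTadd : ∀ g h : G, ∀ x, T (g + h) x = T g (T h x))
    (hErg : ∀ s : Set X, MeasurableSet s → (∀ g, T g ⁻¹' s = s) → μ s = 0 ∨ μ s = 1)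
    (d : ℕ) (hd : 1 ≤ d) (φ ψ : X → Circle)
    (hφm : Measurable φ) (hψm : Measurable ψ)
    (hφ : IsPhasePoly μ T d φ) (hψ : IsPhasePoly μ T d ψ)
    (hnc : ¬ ∃ c : Circle, ∀ᵐ x ∂μ, φ x * (ψ x)⁻¹ = c) :
    Real.sqrt 2 / (2 : ℝ) ^ ((d : ℝ) - 2)
      ≤ Real.sqrt (∫ x, ‖(φ x : ℂ) - (ψ x : ℂ)‖ ^ 2 ∂μ) := by
  set ρ : X → Circle := fun x => φ x * (ψ x)⁻¹ with hρ
  have hρm : Measurable ρ := hφm.mul hψm.inv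
  have hρp : IsPhasePoly μ T d ρ := by
    intro hs
    filter_upwards [hφ hs, hψ hs] with x h1 h2
    show (List.ofFn hs).foldr (polyDisc T) (fun x => φ x * (ψ x)⁻¹) x = 1
    rw [congrFun (foldr_polyDisc_mul_inv φ ψ (List.ofFn hs)) x, h1, h2]
    simp
  have hE : ∫ x, ‖(φ x : ℂ) - (ψ x : ℂ)‖ ^ 2 ∂μ
      = ∫ x, ‖(ρ x : ℂ) - 1‖ ^ 2 ∂μ := by
    congr 1
    funext x
    have hψne : (ψ x : ℂ) ≠ 0 := Circle.coe_ne_zero _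
    have heq : (φ x : ℂ) - (ψ x : ℂ) = ((ρ x : ℂ) - 1) * (ψ x : ℂ) := by
      simp only [hρ, Circle.coe_mul, Circle.coe_inv]
      field_simp
    rw [heq, norm_mul, Circle.norm_coe, mul_one]
  have hb := key_bound hT hTadd hErg d hd ρ hρm hρp hnc
  rw [hE]
  set t : ℝ := (d : ℝ) - 2 with htdef
  have h2t : (0:ℝ) < (2:ℝ) ^ t := Real.rpow_pos_of_pos (by norm_num) _
  have hsq : (4:ℝ) ^ t = ((2:ℝ) ^ t) ^ 2 := by
    rw [← Real.rpow_natCast ((2:ℝ) ^ t) 2, ← Real.rpow_mul (by norm_num : (0:ℝ) ≤ 2)]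
    rw [show (4:ℝ) = (2:ℝ) ^ (2:ℝ) by
      rw [show ((2:ℝ):ℝ) = ((2:ℕ):ℝ) by norm_num, Real.rpow_natCast]; norm_num]
    rw [← Real.rpow_mul (by norm_num : (0:ℝ) ≤ 2)]
    ring_nf
  have hkey : Real.sqrt 2 / (2:ℝ) ^ t = Real.sqrt (2 / (4:ℝ) ^ t) := by
    rw [Real.sqrt_div (by norm_num : (0:ℝ) ≤ 2), hsq, Real.sqrt_sq h2t.le]
  rw [hkey]
  exact Real.sqrt_le_sqrt hb
end

section
/- Let $U$ be a compact abelian group, $\Delta \leq U$ a compact totally disconnected subgroup with $U/\Delta$ topologically isomorphic to the torus $(S^1)^n$. Then $U$ is topologically isomorphic to $(\Delta' \times \mathbb{R}^n)/\Gamma$ for some compact zero-dimensional group $\Delta'$ and discrete subgroup $\Gamma \le \Delta' \times \mathbb{R}^n$: i.e., there exists a compact zero-dimensional subgroup $\Delta'$ of $U$ and a continuous surjective homomorphism $\varphi: \Delta' \times \mathbb{R}^n \to U$ with discrete kernel. -/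
open Set Filter Topology

section Part1

variable {G H : Type*} [TopologicalSpace G] [AddCommGroup G] [IsTopologicalAddGroup G]
  [TopologicalSpace H] [AddCommGroup H] [IsTopologicalAddGroup H]

/-- Lifting a continuous hom `ℝⁿ →+ H` through a locally injective open hom `p : G →+ H`. -/
theorem lift_of_locInj {n : ℕ} (p : G →+ H) (hpo : IsOpenMap p)
    {V : Set G} (hVo : IsOpen V) (h0V : (0:G) ∈ V) (hinj : Set.InjOn p V)
    (c : (Fin n → ℝ) →+ H) (hc : Continuous c) :
    ∃ f : (Fin n → ℝ) →+ G, Continuous f ∧ ∀ x, p (f x) = c x := by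
  classical
  obtain ⟨U₁, U₂, hU₁, hU₂, h01, h02, hUadd⟩ := isOpen_prod_iff.mp
      (continuous_add.isOpen_preimage V hVo) 0 0 (by simpa using h0V)
  set V' : Set G := U₁ ∩ U₂ ∩ V with hV'def
  have hV'o : IsOpen V' := (hU₁.inter hU₂).inter hVo
  have h0V' : (0:G) ∈ V' := ⟨⟨h01, h02⟩, h0V⟩
  have hV'V : V' ⊆ V := inter_subset_right
  have hV'add : ∀ a ∈ V', ∀ b ∈ V', a + b ∈ V := fun a ha b hb =>
    hUadd (Set.mk_mem_prod ha.1.1 hb.1.2)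
  -- choose ε
  have hmem : p '' V' ∈ 𝓝 (0:H) := (hpo V' hV'o).mem_nhds ⟨0, h0V', map_zero p⟩
  have hpre : c ⁻¹' (p '' V') ∈ 𝓝 (0 : Fin n → ℝ) := by
    have := hc.continuousAt (x := (0 : Fin n → ℝ))
    rw [ContinuousAt, map_zero] at this
    exact this hmem
  obtain ⟨ε, hε, hball⟩ := Metric.mem_nhds_iff.mp hpre
  -- the local lift ℓ
  have hex : ∀ x : Fin n → ℝ, ‖x‖ < ε → ∃ g, g ∈ V' ∧ p g = c x := by
    intro x hx
    obtain ⟨g, hg, hpg⟩ := hball (mem_ball_zero_iff.mpr hx)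
    exact ⟨g, hg, hpg⟩
  set ℓ : (Fin n → ℝ) → G := fun x => if h : ∃ g, g ∈ V' ∧ p g = c x then h.choose else 0
    with hℓdef
  have hℓ_spec : ∀ x, ‖x‖ < ε → ℓ x ∈ V' ∧ p (ℓ x) = c x := by
    intro x hx
    have h := hex x hx
    simp only [hℓdef, dif_pos h]
    exact h.choose_spec
  have hℓ_uniq : ∀ x, ‖x‖ < ε → ∀ g ∈ V, p g = c x → g = ℓ x := fun x hx g hg hpg =>
    hinj hg (hV'V (hℓ_spec x hx).1) (by rw [hpg, (hℓ_spec x hx).2])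
  have hℓ0 : ℓ 0 = 0 := by
    refine (hℓ_uniq 0 (by simpa using hε) 0 h0V (by simp)).symm
  have hℓ_add : ∀ x y : Fin n → ℝ, ‖x‖ < ε → ‖y‖ < ε → ‖x + y‖ < ε →
      ℓ (x + y) = ℓ x + ℓ y := by
    intro x y hx hy hxy
    refine (hℓ_uniq (x+y) hxy _ (hV'add _ (hℓ_spec x hx).1 _ (hℓ_spec y hy).1) ?_).symm
    rw [map_add, (hℓ_spec x hx).2, (hℓ_spec y hy).2, map_add]
  have hℓ_nsmul : ∀ (k : ℕ) (x : Fin n → ℝ), ‖x‖ < ε → ‖(k:ℝ) • x‖ < ε →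
      ℓ ((k:ℝ) • x) = k • ℓ x := by
    intro k
    induction k with
    | zero => intro x _ _; simpa using hℓ0
    | succ k ih =>
      intro x hx hkx
      have hxk : ‖(k:ℝ) • x‖ ≤ ‖((k+1:ℕ):ℝ) • x‖ := by
        rw [norm_smul, norm_smul]
        have : ‖(k:ℝ)‖ ≤ ‖((k+1:ℕ):ℝ)‖ := by
          simp only [Real.norm_natCast]
          exact_mod_cast Nat.le_succ k
        exact mul_le_mul_of_nonneg_right this (norm_nonneg x)
      have h1 : ((k+1:ℕ):ℝ) • x = (k:ℝ) • x + x := by push_cast; rw [add_smul, one_smul]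
      rw [h1, hℓ_add _ _ (lt_of_le_of_lt hxk hkx) hx (h1 ▸ hkx),
        ih x hx (lt_of_le_of_lt hxk hkx), succ_nsmul]
  -- continuity of the local lift
  have hℓ_cont : ∀ x₀ : Fin n → ℝ, ‖x₀‖ < ε → ContinuousAt ℓ x₀ := by
    intro x₀ h0
    rw [ContinuousAt]
    rw [Filter.tendsto_def]
    intro s hs
    obtain ⟨O, hOs, hOo, hO⟩ := mem_nhds_iff.mp hs
    have hopen : p '' (O ∩ V') ∈ 𝓝 (c x₀) := by
      refine (hpo _ (hOo.inter hV'o)).mem_nhds ⟨ℓ x₀, ⟨hO, (hℓ_spec x₀ h0).1⟩, (hℓ_spec x₀ h0).2⟩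
    have h1 : ∀ᶠ x in 𝓝 x₀, c x ∈ p '' (O ∩ V') := hc.continuousAt.eventually_mem hopen
    have h2 : ∀ᶠ x in 𝓝 x₀, ‖x‖ < ε :=
      (isOpen_lt continuous_norm continuous_const).eventually_mem h0
    filter_upwards [h1, h2] with x hx1 hx2
    obtain ⟨g, ⟨hgO, hgV'⟩, hpg⟩ := hx1
    have := hℓ_uniq x hx2 g (hV'V hgV') hpg
    exact hOs (this ▸ hgO)
  -- scaling compatibility
  have key : ∀ (a b : ℕ) (x : Fin n → ℝ), 0 < b → ‖((a:ℝ))⁻¹ • x‖ < ε →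
      a • ℓ ((a:ℝ)⁻¹ • x) = (a * b) • ℓ (((a*b : ℕ) : ℝ)⁻¹ • x) := by
    intro a b x hb hna
    set y := (a:ℝ)⁻¹ • x with hy
    have hab : ((a*b : ℕ) : ℝ)⁻¹ • x = (b:ℝ)⁻¹ • y := by
      rw [hy, smul_smul]
      push_cast
      rw [mul_inv]
      ring_nf
    have hb0 : (b:ℝ) ≠ 0 := Nat.cast_ne_zero.mpr hb.ne'
    have hby : (b:ℝ) • ((b:ℝ)⁻¹ • y) = y := by rw [smul_smul, mul_inv_cancel₀ hb0, one_smul]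
    have hb1 : (1:ℝ) ≤ (b:ℝ) := by exact_mod_cast hb
    have hnb : ‖(b:ℝ)⁻¹ • y‖ < ε := by
      rw [norm_smul]
      have h1 : ‖(b:ℝ)⁻¹‖ ≤ 1 := by
        rw [Real.norm_eq_abs, abs_of_nonneg (by positivity)]
        exact inv_le_one_of_one_le₀ hb1
      calc ‖(b:ℝ)⁻¹‖ * ‖y‖ ≤ 1 * ‖y‖ := by gcongr
        _ = ‖y‖ := one_mul _
        _ < ε := hna
    have hkey := hℓ_nsmul b ((b:ℝ)⁻¹ • y) hnb (by rwa [hby])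
    rw [hby] at hkey
    rw [hab, hkey, smul_smul]
  -- the global scale
  set m : (Fin n → ℝ) → ℕ := fun x => ⌈‖x‖ / ε⌉₊ + 1 with hmdef
  have hm0 : ∀ x, 0 < m x := fun x => Nat.succ_pos _
  have hm : ∀ (x : Fin n → ℝ) (k : ℕ), m x ≤ k → ‖((k:ℝ))⁻¹ • x‖ < ε := by
    intro x k hk
    have hk0 : 0 < k := lt_of_lt_of_le (hm0 x) hk
    have hkr : (0:ℝ) < (k:ℝ) := by exact_mod_cast hk0
    have h1 : ‖x‖ / ε < (k:ℝ) := by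
      calc ‖x‖ / ε ≤ (⌈‖x‖ / ε⌉₊ : ℝ) := Nat.le_ceil _
        _ < ((⌈‖x‖ / ε⌉₊ + 1 : ℕ) : ℝ) := by exact_mod_cast Nat.lt_succ_self _
        _ ≤ (k:ℝ) := by exact_mod_cast hk
    have h2 : ‖x‖ < (k:ℝ) * ε := (div_lt_iff₀ hε).mp h1
    have h3 : (k:ℝ)⁻¹ * ‖x‖ < ε := by
      calc (k:ℝ)⁻¹ * ‖x‖ < (k:ℝ)⁻¹ * ((k:ℝ) * ε) := by
            exact mul_lt_mul_of_pos_left h2 (by positivity)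
        _ = ε := by field_simp
    calc ‖((k:ℝ))⁻¹ • x‖ = ‖(k:ℝ)⁻¹‖ * ‖x‖ := norm_smul _ _
      _ = (k:ℝ)⁻¹ * ‖x‖ := by rw [Real.norm_eq_abs, abs_of_nonneg (by positivity)]
      _ < ε := h3
  set F : (Fin n → ℝ) → G := fun x => (m x) • ℓ ((m x : ℝ)⁻¹ • x) with hFdef
  have hFk : ∀ (x : Fin n → ℝ) (k : ℕ), 0 < k → ‖((k:ℝ))⁻¹ • x‖ < ε →
      F x = k • ℓ ((k:ℝ)⁻¹ • x) := by
    intro x k hk hkx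
    have h1 := key (m x) k x hk (hm x (m x) le_rfl)
    have h2 := key k (m x) x (hm0 x) hkx
    show (m x) • ℓ ((m x : ℝ)⁻¹ • x) = k • ℓ ((k:ℝ)⁻¹ • x)
    rw [h1, h2, mul_comm k (m x)]
  have hFadd : ∀ x y, F (x + y) = F x + F y := by
    intro x y
    set k := m x + m y + m (x + y) with hkdef
    have hkx : m x ≤ k := by omega
    have hky : m y ≤ k := by omega
    have hkxy : m (x+y) ≤ k := by omega
    have hk0 : 0 < k := lt_of_lt_of_le (hm0 x) hkx
    have e1 : ((k:ℝ))⁻¹ • (x + y) = (k:ℝ)⁻¹ • x + (k:ℝ)⁻¹ • y := smul_add _ _ _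
    rw [hFk (x+y) k hk0 (hm _ _ hkxy), hFk x k hk0 (hm _ _ hkx), hFk y k hk0 (hm _ _ hky),
      e1, hℓ_add _ _ (hm _ _ hkx) (hm _ _ hky) (by rw [← e1]; exact hm _ _ hkxy), smul_add]
  have hpF : ∀ x, p (F x) = c x := by
    intro x
    have hne : ((m x : ℕ):ℝ) ≠ 0 := Nat.cast_ne_zero.mpr (hm0 x).ne'
    show p ((m x) • ℓ ((m x : ℝ)⁻¹ • x)) = c x
    rw [map_nsmul, (hℓ_spec _ (hm x (m x) le_rfl)).2, ← map_nsmul]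
    congr 1
    rw [← Nat.cast_smul_eq_nsmul ℝ, smul_smul, mul_inv_cancel₀ hne, one_smul]
  have hFcont : Continuous F := by
    rw [continuous_iff_continuousAt]
    intro x₀
    set k := ⌈(‖x₀‖ + 1) / ε⌉₊ + 1 with hkdef
    have hk0 : 0 < k := Nat.succ_pos _
    have hmk : ∀ x : Fin n → ℝ, ‖x‖ < ‖x₀‖ + 1 → m x ≤ k := by
      intro x hx
      have hdiv : ‖x‖ / ε ≤ (‖x₀‖ + 1) / ε := by gcongr
      exact Nat.succ_le_succ (Nat.ceil_le_ceil hdiv)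
    have heq : ∀ x : Fin n → ℝ, ‖x‖ < ‖x₀‖ + 1 → F x = k • ℓ ((k:ℝ)⁻¹ • x) :=
      fun x hx => hFk x k hk0 (hm x k (hmk x hx))
    have hcontAt : ContinuousAt (fun x : Fin n → ℝ => k • ℓ ((k:ℝ)⁻¹ • x)) x₀ := by
      have h1 : ContinuousAt (fun x : Fin n → ℝ => (k:ℝ)⁻¹ • x) x₀ :=
        (continuous_const_smul _).continuousAt
      have h2 : ContinuousAt ℓ ((k:ℝ)⁻¹ • x₀) :=
        hℓ_cont _ (hm x₀ k (hmk x₀ (lt_add_one _)))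
      exact ((continuous_nsmul k).continuousAt).comp (h2.comp h1)
    have hev : ∀ᶠ x in 𝓝 x₀, F x = k • ℓ ((k:ℝ)⁻¹ • x) := by
      have hop : ∀ᶠ x in 𝓝 x₀, ‖x‖ < ‖x₀‖ + 1 :=
        (isOpen_lt continuous_norm continuous_const).eventually_mem
          (show ‖x₀‖ < ‖x₀‖ + 1 from lt_add_one _)
      filter_upwards [hop] with x hx using heq x hx
    exact hcontAt.congr (Filter.EventuallyEq.symm hev)
  exact ⟨AddMonoidHom.mk' F hFadd, hFcont, hpF⟩

end Part1

section Part2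

open QuotientAddGroup

variable {U : Type*} [TopologicalSpace U] [AddCommGroup U] [IsTopologicalAddGroup U]
  [CompactSpace U] [T2Space U]

/-- The induced map on quotients is continuous. -/
theorem qmap_continuous (N Δ : AddSubgroup U) (hle : N ≤ Δ.comap (AddMonoidHom.id U)) :
    Continuous (QuotientAddGroup.map N Δ (AddMonoidHom.id U) hle) := by
  rw [(QuotientAddGroup.isQuotientMap_mk N).continuous_iff]
  have hcomp : (QuotientAddGroup.map N Δ (AddMonoidHom.id U) hle) ∘ ((↑) : U → U ⧸ N)
      = ((↑) : U → U ⧸ Δ) := by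
    funext u
    exact QuotientAddGroup.map_mk N Δ (AddMonoidHom.id U) hle u
  rw [hcomp]
  exact continuous_quot_mk

theorem qmap_isOpenMap (N Δ : AddSubgroup U) (hle : N ≤ Δ.comap (AddMonoidHom.id U)) :
    IsOpenMap (QuotientAddGroup.map N Δ (AddMonoidHom.id U) hle) := by
  intro O hO
  have himg : (QuotientAddGroup.map N Δ (AddMonoidHom.id U) hle) '' O
      = ((↑) : U → U ⧸ Δ) '' (((↑) : U → U ⧸ N) ⁻¹' O) := by
    ext z
    constructor
    · rintro ⟨y, hy, rfl⟩
      obtain ⟨u, rfl⟩ := QuotientAddGroup.mk_surjective y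
      exact ⟨u, hy, (QuotientAddGroup.map_mk N Δ (AddMonoidHom.id U) hle u).symm ▸ rfl⟩
    · rintro ⟨u, hu, rfl⟩
      exact ⟨(u : U ⧸ N), hu, QuotientAddGroup.map_mk N Δ (AddMonoidHom.id U) hle u⟩
  rw [himg]
  exact QuotientAddGroup.isOpenMap_coe _ (continuous_quot_mk.isOpen_preimage O hO)

/-- The image of a compact subgroup `Δ` in `U ⧸ N` is finite when `N` is relatively open
in `Δ`. -/
theorem image_finite_of_relOpen (N Δ : AddSubgroup U) (hNΔ : N ≤ Δ)
    (hΔc : IsClosed (Δ : Set U))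
    (hNo : IsOpen (((↑) : Δ → U) ⁻¹' (N : Set U))) :
    Set.Finite (((↑) : U → U ⧸ N) '' (Δ : Set U)) := by
  haveI : CompactSpace Δ := isCompact_iff_compactSpace.mp (hΔc.isCompact)
  set q' : Δ → U ⧸ N := fun d => ((d : U) : U ⧸ N) with hq'
  have hopenfib : ∀ d : Δ, IsOpen {d' : Δ | (d' : U) - (d : U) ∈ N} := by
    intro d
    have : {d' : Δ | (d' : U) - (d : U) ∈ N} = (fun d' : Δ => d' - d) ⁻¹'
        (((↑) : Δ → U) ⁻¹' (N : Set U)) := rfl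
    rw [this]
    exact (continuous_id.sub continuous_const).isOpen_preimage _ hNo
  obtain ⟨t, ht⟩ := IsCompact.elim_finite_subcover isCompact_univ
    (fun d : Δ => {d' : Δ | (d' : U) - (d : U) ∈ N}) hopenfib
    (fun d _ => Set.mem_iUnion.mpr ⟨d, by simp [AddSubgroup.zero_mem]⟩)
  have hrange : Set.range q' ⊆ q' '' (t : Set Δ) := by
    rintro z ⟨d', rfl⟩
    have := ht (Set.mem_univ d')
    obtain ⟨d, hd, hmem⟩ := Set.mem_iUnion₂.mp this
    refine ⟨d, hd, ?_⟩
    have hsub : (d : U) - (d' : U) ∈ N := by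
      simpa [neg_sub] using N.neg_mem hmem
    exact QuotientAddGroup.eq_iff_sub_mem.mpr hsub
  have : Set.Finite (Set.range q') := Set.Finite.subset (t.finite_toSet.image q') hrange
  have himg : ((↑) : U → U ⧸ N) '' (Δ : Set U) = Set.range q' := by
    ext z
    constructor
    · rintro ⟨u, hu, rfl⟩; exact ⟨⟨u, hu⟩, rfl⟩
    · rintro ⟨⟨u, hu⟩, rfl⟩; exact ⟨u, hu, rfl⟩
  rwa [himg]

/-- Elements killed by the induced quotient map come from `Δ`. -/
theorem qmap_zero_mem_image (N Δ : AddSubgroup U) (hNΔ : N ≤ Δ) (z : U ⧸ N)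
    (hz : QuotientAddGroup.map N Δ (AddMonoidHom.id U) (fun g hg => hNΔ hg) z = 0) :
    z ∈ (((↑) : U → U ⧸ N) '' (Δ : Set U)) := by
  obtain ⟨u, rfl⟩ := QuotientAddGroup.mk_surjective z
  have h3 : QuotientAddGroup.map N Δ (AddMonoidHom.id U) (fun g hg => hNΔ hg)
      ((u : U) : U ⧸ N) = ((u : U) : U ⧸ Δ) :=
    QuotientAddGroup.map_mk N Δ (AddMonoidHom.id U) (fun g hg => hNΔ hg) u
  have : ((u : U) : U ⧸ Δ) = 0 := by rw [← h3]; exact hz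
  exact ⟨u, (QuotientAddGroup.eq_zero_iff u).mp this, rfl⟩

/-- Lifting a hom `ℝⁿ →+ U⧸Δ` to `U⧸N` when `N ≤ Δ` is relatively open in the compact `Δ`. -/
theorem lift_quot_step {n : ℕ} (N Δ : AddSubgroup U) (hNΔ : N ≤ Δ)
    (hΔc : IsClosed (Δ : Set U)) (hNc : IsClosed (N : Set U))
    (hNo : IsOpen (((↑) : Δ → U) ⁻¹' (N : Set U)))
    (c : (Fin n → ℝ) →+ U ⧸ Δ) (hc : Continuous c) :
    ∃ f : (Fin n → ℝ) →+ U ⧸ N, Continuous f ∧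
      ∀ x, QuotientAddGroup.map N Δ (AddMonoidHom.id U) (fun g hg => hNΔ hg) (f x) = c x := by
  haveI : IsClosed (N : Set U) := hNc
  haveI : T1Space (U ⧸ N) := inferInstance
  set p : (U ⧸ N) →+ (U ⧸ Δ) := QuotientAddGroup.map N Δ (AddMonoidHom.id U)
    (fun g hg => hNΔ hg) with hpdef
  set K : Set (U ⧸ N) := ((↑) : U → U ⧸ N) '' (Δ : Set U) with hKdef
  have hKfin : K.Finite := image_finite_of_relOpen N Δ hNΔ hΔc hNo
  have hker : ∀ z : U ⧸ N, p z = 0 → z ∈ K := by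
    intro z hz
    obtain ⟨u, rfl⟩ := QuotientAddGroup.mk_surjective z
    have h3 : p ((u : U) : U ⧸ N) = ((u : U) : U ⧸ Δ) :=
      QuotientAddGroup.map_mk N Δ (AddMonoidHom.id U) (fun g hg => hNΔ hg) u
    have : ((u : U) : U ⧸ Δ) = 0 := by rw [← h3]; exact hz
    exact ⟨u, (QuotientAddGroup.eq_zero_iff u).mp this, rfl⟩
  have hK0 : IsClosed (K \ {0}) := ((hKfin.subset Set.diff_subset).isClosed)
  have h00 : ((0,0) : (U ⧸ N) × (U ⧸ N)) ∈ (fun q : (U ⧸ N) × (U ⧸ N) => q.1 - q.2) ⁻¹'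
      (K \ {0})ᶜ := by
    simp
  obtain ⟨W₁, W₂, hW₁, hW₂, h01, h02, hWsub⟩ := isOpen_prod_iff.mp
    (continuous_sub.isOpen_preimage _ hK0.isOpen_compl) 0 0 h00
  have hinj : Set.InjOn p (W₁ ∩ W₂) := by
    intro a ha b hb hab
    have h1 : a - b ∈ (K \ {0})ᶜ := hWsub (Set.mk_mem_prod ha.1 hb.2)
    have h2 : a - b ∈ K := hker _ (by rw [map_sub, hab, sub_self])
    have : a - b = 0 := by
      by_contra hne
      exact h1 ⟨h2, hne⟩
    exact sub_eq_zero.mp this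
  obtain ⟨f, hfc, hfp⟩ := lift_of_locInj p (qmap_isOpenMap N Δ _) (hW₁.inter hW₂)
    ⟨h01, h02⟩ hinj c hc
  exact ⟨f, hfc, hfp⟩

end Part2

section Part3

open QuotientAddGroup

variable {U : Type*} [TopologicalSpace U] [AddCommGroup U] [IsTopologicalAddGroup U]
  [CompactSpace U] [T2Space U]

/-- Lifting a continuous hom `ℝⁿ →+ U⧸Δ` to `U` when `Δ` is a closed totally disconnected
subgroup of the compact group `U`. -/
theorem exists_lift_to_group {n : ℕ} (Δ : AddSubgroup U) (hΔc : IsClosed (Δ : Set U))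
    (hΔtd : TotallyDisconnectedSpace Δ)
    (c : (Fin n → ℝ) →+ U ⧸ Δ) (hc : Continuous c) :
    ∃ f : (Fin n → ℝ) →+ U, Continuous f ∧ ∀ x, ((f x : U) : U ⧸ Δ) = c x := by
  classical
  haveI : CompactSpace Δ := isCompact_iff_compactSpace.mp hΔc.isCompact
  set good : AddSubgroup U → Prop := fun N =>
    N ≤ Δ ∧ IsClosed (N : Set U) ∧ IsOpen (((↑) : Δ → U) ⁻¹' (N : Set U)) with hgood
  have hΔgood : good Δ := by
    refine ⟨le_rfl, hΔc, ?_⟩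
    have huniv : (((↑) : Δ → U) ⁻¹' (Δ : Set U)) = Set.univ := by
      ext d; simp [d.2]
    rw [huniv]; exact isOpen_univ
  have hinf : ∀ N₁ N₂, good N₁ → good N₂ → good (N₁ ⊓ N₂) := by
    intro N₁ N₂ h1 h2
    refine ⟨le_trans inf_le_left h1.1, ?_, ?_⟩
    · rw [AddSubgroup.coe_inf]; exact h1.2.1.inter h2.2.1
    · rw [AddSubgroup.coe_inf, Set.preimage_inter]; exact h1.2.2.inter h2.2.2
  have hbasis : ∀ W ∈ 𝓝 (0 : U), ∃ N, good N ∧ (N : Set U) ⊆ W := by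
    intro W hW
    have hpre : ((↑) : Δ → U) ⁻¹' W ∈ 𝓝 (0 : Δ) :=
      continuous_subtype_val.continuousAt.preimage_mem_nhds (by simpa using hW)
    obtain ⟨C, ⟨h0C, hCclopen⟩, hCW⟩ := (nhds_basis_clopen (0 : Δ)).mem_iff.mp hpre
    obtain ⟨Hs, hHs⟩ :=
      IsTopologicalAddGroup.exist_openAddSubgroup_sub_clopen_nhds_of_zero hCclopen h0C
    refine ⟨(Hs.toAddSubgroup).map Δ.subtype, ⟨?_, ?_, ?_⟩, ?_⟩
    · exact AddSubgroup.map_subtype_le _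
    · have : ((Hs.toAddSubgroup.map Δ.subtype : AddSubgroup U) : Set U)
          = ((↑) : Δ → U) '' (Hs : Set Δ) := by
        rw [AddSubgroup.coe_map]; rfl
      rw [this]
      exact (Hs.isClosed.isCompact.image continuous_subtype_val).isClosed
    · have : (((↑) : Δ → U) ⁻¹' ((Hs.toAddSubgroup.map Δ.subtype : AddSubgroup U) : Set U))
          = (Hs : Set Δ) := by
        ext d
        constructor
        · rintro ⟨d', hd', hdd⟩
          have : d' = d := Subtype.val_injective hdd
          rwa [← this]
        · intro hd; exact ⟨d, hd, rfl⟩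
      rw [this]
      exact Hs.isOpen
    · rintro z ⟨d, hd, rfl⟩
      exact hCW (hHs hd)
  -- the per-N lifts
  set ι := {N : AddSubgroup U // good N} with hι
  haveI : Nonempty ι := ⟨⟨Δ, hΔgood⟩⟩
  have hstep : ∀ N : ι, ∃ f : (Fin n → ℝ) →+ U ⧸ (N.1), Continuous f ∧
      ∀ x, QuotientAddGroup.map N.1 Δ (AddMonoidHom.id U) (fun g hg => N.2.1 hg) (f x) = c x :=
    fun N => lift_quot_step N.1 Δ N.2.1 hΔc N.2.2.1 N.2.2.2 c hc
  choose fN hfNc hfNp using hstep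
  -- compatibility
  have compat : ∀ (N₁ N₂ : ι) (h : N₁.1 ≤ N₂.1) (x : Fin n → ℝ),
      QuotientAddGroup.map N₁.1 N₂.1 (AddMonoidHom.id U) (fun g hg => h hg) (fN N₁ x)
        = fN N₂ x := by
    intro N₁ N₂ h
    haveI : IsClosed (N₂.1 : Set U) := N₂.2.2.1
    haveI : T1Space (U ⧸ N₂.1) := inferInstance
    set pm := QuotientAddGroup.map N₁.1 N₂.1 (AddMonoidHom.id U) (fun g hg => h hg) with hpm
    set K : Set (U ⧸ N₂.1) := ((↑) : U → U ⧸ N₂.1) '' (Δ : Set U) with hK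
    have hKfin : K.Finite := image_finite_of_relOpen N₂.1 Δ N₂.2.1 hΔc N₂.2.2.2
    set g : (Fin n → ℝ) → U ⧸ N₂.1 := fun x => fN N₂ x - pm (fN N₁ x) with hgdef
    have hgcont : Continuous g := (hfNc N₂).sub ((qmap_continuous _ _ _).comp (hfNc N₁))
    have hcomp : ∀ x, QuotientAddGroup.map N₂.1 Δ (AddMonoidHom.id U)
        (fun g hg => N₂.2.1 hg) (pm (fN N₁ x)) = c x := by
      intro x
      obtain ⟨u, hu⟩ := QuotientAddGroup.mk_surjective (fN N₁ x)
      have h1 := hfNp N₁ x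
      rw [← hu] at h1
      rw [← hu]
      exact h1
    have hgK : ∀ x, g x ∈ K := by
      intro x
      apply qmap_zero_mem_image N₂.1 Δ N₂.2.1
      rw [hgdef]
      dsimp only
      rw [map_sub, hfNp N₂ x, hcomp x, sub_self]
    have hzero : {x : Fin n → ℝ | g x = 0} = Set.univ := by
      have hcl : IsClosed {x : Fin n → ℝ | g x = 0} :=
        IsClosed.preimage hgcont isClosed_singleton
      have hop : IsOpen {x : Fin n → ℝ | g x = 0} := by
        have heq : {x : Fin n → ℝ | g x = 0} = g ⁻¹' ((K \ {0})ᶜ) := by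
          ext x
          constructor
          · intro hx
            simp only [Set.mem_setOf_eq] at hx
            simp [Set.mem_preimage, hx]
          · intro hx
            by_contra hne
            exact hx ⟨hgK x, hne⟩
        rw [heq]
        exact IsOpen.preimage hgcont ((hKfin.subset Set.diff_subset).isClosed.isOpen_compl)
      haveI : PreconnectedSpace (Fin n → ℝ) := ⟨(convex_univ (𝕜 := ℝ)).isPreconnected⟩
      apply IsClopen.eq_univ ⟨hcl, hop⟩
      refine ⟨0, ?_⟩
      simp only [Set.mem_setOf_eq, hgdef]
      rw [map_zero, map_zero, map_zero, sub_self]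
    intro x
    have hx : g x = 0 := by
      have := Set.eq_univ_iff_forall.mp hzero x
      exact this
    have : fN N₂ x = pm (fN N₁ x) := sub_eq_zero.mp hx
    exact this.symm
  -- existence and uniqueness of the limit point
  have hex : ∀ x : Fin n → ℝ, ∃ u : U, ∀ N : ι, ((u : U ⧸ N.1)) = fN N x := by
    intro x
    set A : ι → Set U := fun N => ((↑) : U → U ⧸ N.1) ⁻¹' {fN N x} with hA
    have hne : ∀ N, (A N).Nonempty := by
      intro N
      obtain ⟨u, hu⟩ := QuotientAddGroup.mk_surjective (fN N x)
      exact ⟨u, hu⟩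
    have hcl : ∀ N, IsClosed (A N) := by
      intro N
      obtain ⟨u₀, hu₀⟩ := QuotientAddGroup.mk_surjective (fN N x)
      have heq : A N = (fun v : U => v - u₀) ⁻¹' (N.1 : Set U) := by
        ext v
        simp only [hA, Set.mem_preimage, Set.mem_singleton_iff, ← hu₀]
        exact ⟨fun h => QuotientAddGroup.eq_iff_sub_mem.mp h,
          fun h => QuotientAddGroup.eq_iff_sub_mem.mpr h⟩
      rw [heq]
      exact IsClosed.preimage (continuous_id.sub continuous_const) N.2.2.1
    have hcpt : ∀ N, IsCompact (A N) := fun N => (hcl N).isCompact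
    have hdir : Directed (· ⊇ ·) A := by
      have hstep2 : ∀ (N₁ N₂ : ι) (h : N₁.1 ≤ N₂.1), A N₁ ⊆ A N₂ := by
        intro N₁ N₂ h u hu
        have hu' : ((u : U ⧸ N₁.1)) = fN N₁ x := hu
        have h3 := compat N₁ N₂ h x
        have h4 : QuotientAddGroup.map N₁.1 N₂.1 (AddMonoidHom.id U) (fun g hg => h hg)
            ((u : U ⧸ N₁.1)) = ((u : U ⧸ N₂.1)) :=
          QuotientAddGroup.map_mk _ _ _ _ u
        show ((u : U ⧸ N₂.1)) = fN N₂ x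
        rw [← h4, hu', h3]
      intro N₁ N₂
      refine ⟨⟨N₁.1 ⊓ N₂.1, hinf _ _ N₁.2 N₂.2⟩, ?_, ?_⟩
      · exact hstep2 _ _ inf_le_left
      · exact hstep2 _ _ inf_le_right
    obtain ⟨u, hu⟩ :=
      IsCompact.nonempty_iInter_of_directed_nonempty_isCompact_isClosed A hdir hne hcpt hcl
    exact ⟨u, fun N => Set.mem_iInter.mp hu N⟩
  have huniq : ∀ (u u' : U), (∀ N : ι, ((u : U ⧸ N.1)) = ((u' : U ⧸ N.1))) → u = u' := by
    intro u u' h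
    by_contra hne
    have hW : ({u - u'}ᶜ : Set U) ∈ 𝓝 (0 : U) := by
      apply IsOpen.mem_nhds isOpen_compl_singleton
      simp only [Set.mem_compl_iff, Set.mem_singleton_iff]
      exact fun hc => hne (sub_eq_zero.mp hc.symm)
    obtain ⟨N, hNg, hNW⟩ := hbasis _ hW
    have hmem : u - u' ∈ N := QuotientAddGroup.eq_iff_sub_mem.mp (h ⟨N, hNg⟩)
    exact (hNW hmem) rfl
  choose F hF using hex
  have hFadd : ∀ x y, F (x + y) = F x + F y := by
    intro x y
    apply huniq
    intro N
    rw [hF (x + y) N]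
    have : ((F x + F y : U) : U ⧸ N.1) = ((F x : U) : U ⧸ N.1) + ((F y : U) : U ⧸ N.1) := rfl
    rw [this, hF x N, hF y N, ← map_add]
  have hq : ∀ x, ((F x : U) : U ⧸ Δ) = c x := by
    intro x
    have h1 := hF x ⟨Δ, hΔgood⟩
    have h2 := hfNp ⟨Δ, hΔgood⟩ x
    obtain ⟨u, hu⟩ := QuotientAddGroup.mk_surjective (fN ⟨Δ, hΔgood⟩ x)
    rw [← hu] at h2
    rw [show ((F x : U) : U ⧸ Δ) = ((F x : U) : U ⧸ (⟨Δ, hΔgood⟩ : ι).1) from rfl, h1, ← hu]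
    exact h2
  have hFcont : Continuous F := by
    rw [continuous_iff_continuousAt]
    intro x₀
    have key : ∀ W ∈ 𝓝 (0 : U), ∀ᶠ x in 𝓝 x₀, F x - F x₀ ∈ W := by
      intro W hW
      obtain ⟨W', hW'sub, hW'o, h0W'⟩ := mem_nhds_iff.mp hW
      obtain ⟨W₁, W₂, hW₁, hW₂, h01, h02, hadd⟩ := isOpen_prod_iff.mp
        (continuous_add.isOpen_preimage _ hW'o) 0 0 (by simpa using h0W')
      obtain ⟨N, hNg, hNW⟩ := hbasis W₁ (hW₁.mem_nhds h01)
      set N' : ι := ⟨N, hNg⟩ with hN'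
      have hcont2 : Continuous (fun x => fN N' x - fN N' x₀) := (hfNc N').sub continuous_const
      have hopen2 : IsOpen (((↑) : U → U ⧸ N) '' W₂) := QuotientAddGroup.isOpenMap_coe _ hW₂
      have h0m : ((↑) : U → U ⧸ N) '' W₂ ∈ 𝓝 (fN N' x₀ - fN N' x₀) := by
        rw [sub_self]
        exact hopen2.mem_nhds ⟨0, h02, by simp⟩
      have hmember : ∀ᶠ x in 𝓝 x₀, fN N' x - fN N' x₀ ∈ ((↑) : U → U ⧸ N) '' W₂ :=
        hcont2.continuousAt.eventually_mem h0m
      filter_upwards [hmember] with x hx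
      obtain ⟨w, hw, hww⟩ := hx
      have hmkdiff : ((F x - F x₀ : U) : U ⧸ N) = fN N' x - fN N' x₀ := by
        have : ((F x - F x₀ : U) : U ⧸ N) = ((F x : U) : U ⧸ N) - ((F x₀ : U) : U ⧸ N) := rfl
        rw [this, show ((F x : U) : U ⧸ N) = ((F x : U) : U ⧸ N'.1) from rfl, hF x N', hF x₀ N']
      have hNmem : (F x - F x₀) - w ∈ N :=
        QuotientAddGroup.eq_iff_sub_mem.mp (by rw [hmkdiff, ← hww])
      have h5 : ((F x - F x₀ - w) + w) = F x - F x₀ := sub_add_cancel _ _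
      have h6 : ((F x - F x₀ - w) + w) ∈ W' :=
        hadd (Set.mk_mem_prod (hNW hNmem) hw)
      rw [h5] at h6
      exact hW'sub h6
    have h1 : Filter.Tendsto (fun x => F x - F x₀) (𝓝 x₀) (𝓝 0) := by
      rw [Filter.tendsto_def]
      intro s hs
      exact key s hs
    have h2 := h1.add_const (F x₀)
    simp only [zero_add, sub_add_cancel] at h2
    exact h2
  exact ⟨AddMonoidHom.mk' F hFadd, hFcont, hq⟩

end Part3

/-- If `U` is a compact abelian group with a compact totally disconnected subgroup `Δ`
such that `U/Δ` is topologically isomorphic to the torus `(S¹)ⁿ`, then there are a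
compact zero-dimensional subgroup `Δ'` of `U` and a continuous surjective homomorphism
`Δ' × ℝⁿ → U` with discrete kernel (so `U ≅ (Δ' × ℝⁿ)/Γ`). -/
theorem compact_abelian_finiteDim_structure
    {U : Type*} [TopologicalSpace U] [AddCommGroup U] [IsTopologicalAddGroup U]
    [CompactSpace U] [T2Space U]
    (n : ℕ) (Δ : AddSubgroup U) (hΔc : IsClosed (Δ : Set U))
    (hΔtd : TotallyDisconnectedSpace Δ)
    (htorus : ∃ e : (U ⧸ Δ) ≃+ (Fin n → AddCircle (1 : ℝ)),
        Continuous e ∧ Continuous e.symm) :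
    ∃ Δ' : AddSubgroup U, IsClosed (Δ' : Set U) ∧ TotallyDisconnectedSpace Δ' ∧
      ∃ φ : (Δ' × (Fin n → ℝ)) →+ U, Continuous φ ∧ Function.Surjective φ ∧
        DiscreteTopology φ.ker := by
  classical
  obtain ⟨e, hec, hesc⟩ := htorus
  -- the coordinatewise quotient map ℝⁿ → (S¹)ⁿ
  set Φ : (Fin n → ℝ) →+ (Fin n → AddCircle (1:ℝ)) :=
    { toFun := fun x i => (x i : AddCircle (1:ℝ))
      map_zero' := rfl
      map_add' := fun x y => rfl } with hΦdef
  have hΦcont : Continuous Φ :=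
    continuous_pi fun i => continuous_quot_mk.comp (continuous_apply i)
  have hΦsurj : Function.Surjective Φ := by
    intro z
    have h1 : ∀ i, ∃ r : ℝ, (r : AddCircle (1:ℝ)) = z i :=
      fun i => QuotientAddGroup.mk_surjective (z i)
    choose r hr using h1
    exact ⟨r, funext hr⟩
  set c : (Fin n → ℝ) →+ (U ⧸ Δ) := (e.symm.toAddMonoidHom).comp Φ with hcdef
  have hccont : Continuous c := by
    show Continuous fun x => e.symm (Φ x)
    exact hesc.comp hΦcont
  have hcsurj : Function.Surjective c := by
    intro z
    obtain ⟨w, hw⟩ := e.symm.surjective z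
    obtain ⟨x, hx⟩ := hΦsurj w
    exact ⟨x, by simp only [hcdef, AddMonoidHom.comp_apply, AddEquiv.coe_toAddMonoidHom, hx, hw]⟩
  -- lift `c` to `U`
  obtain ⟨f, hfc, hfp⟩ := exists_lift_to_group Δ hΔc hΔtd c hccont
  -- the homomorphism
  set φ : (Δ × (Fin n → ℝ)) →+ U := (Δ.subtype).coprod f with hφdef
  have hφ_apply : ∀ q : Δ × (Fin n → ℝ), φ q = (q.1 : U) + f q.2 := fun q => rfl
  have hφcont : Continuous φ := by
    have : Continuous fun q : Δ × (Fin n → ℝ) => ((q.1 : U) + f q.2) :=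
      (continuous_subtype_val.comp continuous_fst).add (hfc.comp continuous_snd)
    exact this
  have hφsurj : Function.Surjective φ := by
    intro u
    obtain ⟨x, hx⟩ := hcsurj ((u : U ⧸ Δ))
    have hmem : u - f x ∈ Δ := by
      apply QuotientAddGroup.eq_iff_sub_mem.mp
      rw [hfp x, hx]
    refine ⟨(⟨u - f x, hmem⟩, x), ?_⟩
    rw [hφ_apply]
    exact sub_add_cancel u (f x)
  -- kernel facts
  have hker_neg : ∀ q : Δ × (Fin n → ℝ), φ q = 0 → f q.2 = -(q.1 : U) := by
    intro q hq
    rw [hφ_apply] at hq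
    exact eq_neg_of_add_eq_zero_right hq
  have hker_x : ∀ q : Δ × (Fin n → ℝ), φ q = 0 → ∀ i, ∃ k : ℤ, q.2 i = (k : ℝ) := by
    intro q hq i
    have h1 : f q.2 = -(q.1 : U) := hker_neg q hq
    have h2 : c q.2 = 0 := by
      rw [← hfp q.2, h1]
      exact (QuotientAddGroup.eq_zero_iff _).mpr (Δ.neg_mem q.1.2)
    have h3 : Φ q.2 = 0 := e.symm.injective (by rw [map_zero]; exact h2)
    have h4 : ((q.2 i : ℝ) : AddCircle (1:ℝ)) = 0 := congrFun h3 i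
    have h5 : q.2 i ∈ AddSubgroup.zmultiples (1:ℝ) := (QuotientAddGroup.eq_zero_iff _).mp h4
    obtain ⟨k, hk⟩ := (AddSubgroup.mem_zmultiples_iff).mp h5
    exact ⟨k, by rw [← hk, zsmul_eq_mul, mul_one]⟩
  have hsep : ∀ q q' : Δ × (Fin n → ℝ), φ q = 0 → φ q' = 0 →
      dist q.2 q'.2 < 1/2 → q = q' := by
    intro q q' hq hq' hdist
    have hx : q.2 = q'.2 := by
      funext i
      obtain ⟨k, hk⟩ := hker_x q hq i
      obtain ⟨k', hk'⟩ := hker_x q' hq' i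
      have hdi : dist (q.2 i) (q'.2 i) < 1/2 :=
        (dist_pi_lt_iff (by norm_num)).mp hdist i
      rw [hk, hk', Real.dist_eq] at hdi
      have habs : |((k - k' : ℤ) : ℝ)| < 1 := by
        push_cast
        exact lt_trans hdi (by norm_num)
      have habs' : |(k - k' : ℤ)| < 1 := by exact_mod_cast habs
      have h6 := abs_lt.mp habs'
      have hkk : k = k' := by omega
      rw [hk, hk', hkk]
    have hd : q.1 = q'.1 := by
      apply Subtype.ext
      have h1 : f q.2 = -(q.1 : U) := hker_neg q hq
      have h2 : f q'.2 = -(q'.1 : U) := hker_neg q' hq'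
      have h3 : -(q.1 : U) = -(q'.1 : U) := by rw [← h1, hx, h2]
      exact neg_inj.mp h3
    exact Prod.ext hd hx
  have hdisc : DiscreteTopology φ.ker := by
    rw [discreteTopology_iff_isOpen_singleton]
    intro p₀
    rw [isOpen_induced_iff]
    refine ⟨(Set.univ : Set Δ) ×ˢ Metric.ball p₀.1.2 (1/2),
      isOpen_univ.prod Metric.isOpen_ball, ?_⟩
    ext q
    simp only [Set.mem_preimage, Set.mem_prod, Set.mem_univ, true_and, Metric.mem_ball,
      Set.mem_singleton_iff]
    constructor
    · intro hdq
      have h1 : φ q.1 = 0 := q.2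
      have h2 : φ p₀.1 = 0 := p₀.2
      exact Subtype.ext (hsep _ _ h1 h2 hdq)
    · rintro rfl
      norm_num [dist_self]
  exact ⟨Δ, hΔc, hΔtd, φ, hφcont, hφsurj, hdisc⟩
end
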